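/- arXiv:1311.7631 — 5 statements merged into one kernel-verified Lean document; each statement's English description precedes it below -/
import Mathlib

section
/- Let n ≥ 2, r > 1, p = r/(r+1). Let M be the Markov chain on states {0,...,n+1} with transitions: P(0, n+1) = P(n, n+1) = 1, P(n+1, 1) = 1, and for 1 ≤ i ≤ n−1, P(i, i+1) = p and P(i, i−1) = 1−p. Define f = (r^n − r^{n−1})/(r^n − 1) and the vector λ with λ_0 = 1−f, λ_j = (1+r)(1−f)(r^n − r^j)/(r^n − r) for 1 ≤ j ≤ n−1, λ_n = f, λ_{n+1} = 1. Then λ is a left eigenvector of the transition matrix P with eigenvalue 1, i.e., λP = λ. -/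
/-!
In the interior `1 ≤ j ≤ n - 1` the vector `λ` equals
`x j = (r + 1) / r * (r ^ n - r ^ j) / (r ^ n - 1)`. Being affine in `r ^ j`, `x` is harmonic
for the biased walk: `p x_{j-1} + (1 - p) x_{j+1} = x_j`. Its boundary values
`p x_0 = 1 = λ_{n+1}` and `x_n = 0` are exactly what the columns `1` and `n - 1` receive in place
of the missing interior neighbours, so every interior column balances; the columns `0`, `n` and
`n + 1` are direct computations, `f` being `p x_{n-1}`.
-/

noncomputable def stationaryProfile (r : ℝ) (n j : ℕ) : ℝ :=
  (r + 1) / r * ((r ^ n - r ^ j) / (r ^ n - 1))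

section ColumnSum

variable {N : ℕ} {w g : ℕ → ℝ}

lemma sum_range_mul_eq_single {a : ℕ} (ha : a < N) (h : ∀ i < N, i ≠ a → g i = 0) :
    ∑ i ∈ Finset.range N, w i * g i = w a * g a :=
  Finset.sum_eq_single_of_mem a (Finset.mem_range.2 ha) fun i hi hia => by
    rw [h i (Finset.mem_range.1 hi) hia, mul_zero]

lemma sum_range_mul_eq_add {a b : ℕ} (ha : a < N) (hb : b < N) (hab : a ≠ b)
    (h : ∀ i < N, i ≠ a → i ≠ b → g i = 0) :
    ∑ i ∈ Finset.range N, w i * g i = w a * g a + w b * g b :=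
  Finset.sum_eq_add_of_mem a b (Finset.mem_range.2 ha) (Finset.mem_range.2 hb) hab
    fun i hi hne => by
      rw [h i (Finset.mem_range.1 hi) hne.1 hne.2, mul_zero]

end ColumnSum

section StationaryProfile

variable {r : ℝ} (n : ℕ)

lemma stationaryProfile_self : stationaryProfile r n n = 0 := by simp [stationaryProfile]

lemma mul_stationaryProfile (hr0 : r ≠ 0) (hr1 : r + 1 ≠ 0) (j : ℕ) :
    r / (r + 1) * stationaryProfile r n j = (r ^ n - r ^ j) / (r ^ n - 1) := by
  unfold stationaryProfile; field_simp

lemma stationaryProfile_harmonic (hr0 : r ≠ 0) (hr1 : r + 1 ≠ 0) (j : ℕ) :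
    r / (r + 1) * stationaryProfile r n j + (1 - r / (r + 1)) * stationaryProfile r n (j + 2) =
      stationaryProfile r n (j + 1) := by
  unfold stationaryProfile; field_simp; ring

lemma one_sub_fixation (hrn : r ^ n ≠ 1) :
    1 - (r ^ n - r ^ (n - 1)) / (r ^ n - 1) = (r ^ (n - 1) - 1) / (r ^ n - 1) := by
  field_simp [sub_ne_zero.2 hrn]; ring

lemma one_sub_mul_stationaryProfile_one (hn : 1 ≤ n) (hr0 : r ≠ 0) (hr1 : r + 1 ≠ 0) :
    (1 - r / (r + 1)) * stationaryProfile r n 1 = (r ^ (n - 1) - 1) / (r ^ n - 1) := by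
  obtain ⟨m, rfl⟩ : ∃ m, n = m + 1 := ⟨n - 1, by omega⟩
  simp only [stationaryProfile, Nat.add_sub_cancel]; field_simp; ring

lemma interior_weight_eq_stationaryProfile (hn : 1 ≤ n) (hr0 : r ≠ 0) (hrn : r ^ n ≠ 1)
    (hrn1 : r ^ (n - 1) ≠ 1) (j : ℕ) :
    (1 + r) * ((r ^ (n - 1) - 1) / (r ^ n - 1)) * (r ^ n - r ^ j) / (r ^ n - r) =
      stationaryProfile r n j := by
  obtain ⟨m, rfl⟩ : ∃ m, n = m + 1 := ⟨n - 1, by omega⟩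
  have h1 : r ^ (m + 1) - 1 ≠ 0 := sub_ne_zero.2 hrn
  have h2 : r ^ m - 1 ≠ 0 := sub_ne_zero.2 hrn1
  have h3 : r ^ (m + 1) - r = r * (r ^ m - 1) := by ring
  unfold stationaryProfile; rw [h3]; simp only [Nat.add_sub_cancel]; field_simp; ring

end StationaryProfile

/-- The explicit vector `λ` is a left eigenvector with eigenvalue 1 of the
transition matrix of the chain of active steps of the Moran process. -/
theorem stmt_3 (n : ℕ) (hn : 2 ≤ n) (r : ℝ) (hr : 1 < r)
    (p : ℝ) (hp : p = r / (r + 1))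
    (P : ℕ → ℕ → ℝ)
    (hP0 : P 0 (n + 1) = 1) (hPn : P n (n + 1) = 1) (hPtop : P (n + 1) 1 = 1)
    (hPup : ∀ i : ℕ, 1 ≤ i → i ≤ n - 1 → P i (i + 1) = p)
    (hPdown : ∀ i : ℕ, 1 ≤ i → i ≤ n - 1 → P i (i - 1) = 1 - p)
    (hPzero : ∀ i j : ℕ, i ≤ n + 1 → j ≤ n + 1 →
      ¬((i = 0 ∧ j = n + 1) ∨ (i = n ∧ j = n + 1) ∨ (i = n + 1 ∧ j = 1) ∨
        (1 ≤ i ∧ i ≤ n - 1 ∧ (j = i + 1 ∨ j = i - 1))) → P i j = 0)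
    (f : ℝ) (hf : f = (r ^ n - r ^ (n - 1)) / (r ^ n - 1))
    (lam : ℕ → ℝ)
    (hlam0 : lam 0 = 1 - f)
    (hlamj : ∀ j : ℕ, 1 ≤ j → j ≤ n - 1 →
      lam j = (1 + r) * (1 - f) * (r ^ n - r ^ j) / (r ^ n - r))
    (hlamn : lam n = f) (hlamtop : lam (n + 1) = 1) :
    ∀ j ∈ Finset.range (n + 2),
      ∑ i ∈ Finset.range (n + 2), lam i * P i j = lam j := by
  intro j hj
  rw [Finset.mem_range] at hj
  subst hp hf
  have hr0 : r ≠ 0 := by positivity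
  have hr1 : r + 1 ≠ 0 := by positivity
  have hrn : r ^ n ≠ 1 := (one_lt_pow₀ hr (by omega)).ne'
  have hlam : ∀ i, 1 ≤ i → i ≤ n - 1 → lam i = stationaryProfile r n i :=
    fun i hi hi' => by
      rw [hlamj i hi hi', one_sub_fixation n hrn,
        interior_weight_eq_stationaryProfile n (by omega) hr0 hrn (one_lt_pow₀ hr (by omega)).ne']
  obtain rfl | hj0 := eq_or_ne j 0
  · rw [sum_range_mul_eq_single (a := 1) (by omega) fun i _ _ =>
      hPzero i 0 (by omega) (by omega) (by omega)]
    rw [hPdown 1 le_rfl (by omega), hlam 1 le_rfl (by omega), hlam0, mul_comm,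
      one_sub_mul_stationaryProfile_one n (by omega) hr0 hr1, one_sub_fixation n hrn]
  obtain rfl | hjtop := eq_or_ne j (n + 1)
  · rw [sum_range_mul_eq_add (a := 0) (b := n) (by omega) (by omega) (by omega) fun i _ _ _ =>
      hPzero i _ (by omega) (by omega) (by omega)]
    rw [hP0, hPn, hlam0, hlamn, hlamtop]
    ring
  obtain rfl | hjn := eq_or_ne n j
  · rw [sum_range_mul_eq_single (a := n - 1) (by omega) fun i _ _ =>
      hPzero i _ (by omega) (by omega) (by omega)]
    have hup : P (n - 1) n = r / (r + 1) := by
      simpa [Nat.sub_add_cancel (show 1 ≤ n by omega)] using hPup (n - 1) (by omega) le_rfl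
    rw [hup, hlam (n - 1) (by omega) le_rfl, hlamn, mul_comm, mul_stationaryProfile n hr0 hr1]
  obtain ⟨k, rfl⟩ : ∃ k, j = k + 1 := ⟨j - 1, by omega⟩
  have hfrom_above : lam (k + 2) * P (k + 2) (k + 1) =
      (1 - r / (r + 1)) * stationaryProfile r n (k + 2) := by
    obtain hk | rfl := lt_or_eq_of_le (show k + 2 ≤ n by omega)
    · have hdown : P (k + 2) (k + 1) = 1 - r / (r + 1) := hPdown (k + 2) (by omega) (by omega)
      rw [hdown, hlam (k + 2) (by omega) (by omega), mul_comm]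
    · rw [hPzero (k + 2) (k + 1) (by omega) (by omega) (by omega), stationaryProfile_self,
        mul_zero, mul_zero]
  have hfrom_below : ∃ a < n + 2, a ≠ k + 2 ∧
      lam a * P a (k + 1) = r / (r + 1) * stationaryProfile r n k ∧
      ∀ i < n + 2, i ≠ a → i ≠ k + 2 → P i (k + 1) = 0 := by
    obtain rfl | hk := eq_or_ne k 0
    · refine ⟨n + 1, by omega, by omega, ?_, fun i _ _ _ =>
        hPzero i _ (by omega) (by omega) (by omega)⟩
      rw [hPtop, hlamtop, mul_stationaryProfile n hr0 hr1, pow_zero,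
        div_self (sub_ne_zero.2 hrn), mul_one]
    · refine ⟨k, by omega, by omega, ?_, fun i _ _ _ =>
        hPzero i _ (by omega) (by omega) (by omega)⟩
      rw [hPup k (by omega) (by omega), hlam k (by omega) (by omega), mul_comm]
  obtain ⟨a, ha, hak, hbelow, hzero⟩ := hfrom_below
  rw [sum_range_mul_eq_add ha (by omega) hak hzero, hbelow, hfrom_above,
    stationaryProfile_harmonic n hr0 hr1, hlam (k + 1) (by omega) (by omega)]
end

section
/- Let G be a strongly connected Δ-regular digraph on n vertices, r > 1, and for a state S with |S| = k let W_k = n + (r−1)k. For each k ∈ {1,...,n−1} let m_k⁺ = max{r·deg⁺(S) + deg⁻(S) : |S| = k} and m_k⁻ = min{r·deg⁺(S) + deg⁻(S) : |S| = k}. Then the expected absorption time of the Moran process started from a uniformly random single mutant is at least (1 − 1/r²)·W_1·Δ·Σ_{k=1}^{n−1} 1/m_k⁺ and at most (1 + 1/r)·W_n·Δ·Σ_{k=1}^{n−1} 1/m_k⁻. -/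
open Finset

/-- Number of edges from `S` to its complement. -/
def degPlus {V : Type*} [Fintype V] [DecidableEq V]
    (E : V → V → Prop) [DecidableRel E] (S : Finset V) : ℕ :=
  ((univ : Finset (V × V)).filter (fun e => E e.1 e.2 ∧ e.1 ∈ S ∧ e.2 ∉ S)).card

/-- Number of edges from the complement of `S` into `S`. -/
def degMinus {V : Type*} [Fintype V] [DecidableEq V]
    (E : V → V → Prop) [DecidableRel E] (S : Finset V) : ℕ :=
  ((univ : Finset (V × V)).filter (fun e => E e.1 e.2 ∧ e.1 ∉ S ∧ e.2 ∈ S)).card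

/-- One-step transition probability of the Moran process with mutant fitness
`r` on the digraph `E`: a vertex `u` is chosen proportionally to its fitness,
then a uniformly random out-neighbour `v` of `u` is replaced by a copy of `u`. -/
noncomputable def moranP {V : Type*} [Fintype V] [DecidableEq V]
    (E : V → V → Prop) [DecidableRel E] (r : ℝ) (S S' : Finset V) : ℝ :=
  ∑ u : V, ∑ v ∈ univ.filter (fun v => E u v),
    if S' = (if u ∈ S then insert v S else S.erase v) then
      (if u ∈ S then r else 1) /
        (((Fintype.card V : ℝ) + (r - 1) * S.card) *
          ((univ.filter (fun w => E u w)).card : ℝ))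
    else 0

/-!
On a `Δ`-regular digraph `deg⁺(S) = deg⁻(S)`, so in one step of the Moran process a function `f`
of the number `k = |S|` of mutants drifts by
`(r (f(k+1) - f(k)) + (f(k-1) - f(k))) deg⁺(S) / (W_k Δ)`.
Take for `f` the solution `G` of the birth–death recurrence
`r (G(k+1) - G(k)) + (G(k-1) - G(k)) = -c_k`, `G(0) = G(n) = 0`, with `c_k = (r+1) W_k Δ / m_k`:
then `G(|S|)` drifts by `-(r deg⁺(S) + deg⁻(S)) / m_{|S|}`, which is at most `-1` for `m = m⁻`
and at least `-1` for `m = m⁺`, while the absorption time `T` drifts by exactly `-1`. Since by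
strong connectivity the chain can always move up along an edge leaving `S`, the minimum
principle turns this into `T({v}) ≤ G(1)`, resp. `G(1) ≤ T({v})`. Finally
`G(1) = ∑ⱼ cⱼ (1 - r^{-(n-j)}) / (r (1 - r^{-n}))`, and these weights lie between `(1 - 1/r)/r`
and `1/r`.
-/

namespace MoranProcess

noncomputable section

section Potential

variable (r : ℝ) (c : ℕ → ℝ) (n : ℕ)

/- `potentialStep k = G(k) - G(k+1)` solves `r b(k+1) = b(k) + c(k+1)` from `b(0) = -G(1)`;
the value `potentialOne` of `G(1)` is the one for which the steps sum to `G(0) = 0`. -/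

def potentialWeight (j : ℕ) : ℝ := (1 - r⁻¹ ^ (n - j)) / (r * (1 - r⁻¹ ^ n))

def potentialOne : ℝ := ∑ j ∈ Icc 1 (n - 1), c j * potentialWeight r n j

def potentialStep (k : ℕ) : ℝ :=
  ∑ j ∈ Icc 1 k, r⁻¹ ^ (k + 1 - j) * c j - potentialOne r c n * r⁻¹ ^ k

def potential (k : ℕ) : ℝ := ∑ j ∈ Ico k n, potentialStep r c n j

variable {r}

lemma potentialStep_succ (hr : r ≠ 0) (k : ℕ) :
    r * potentialStep r c n (k + 1) = potentialStep r c n k + c (k + 1) := by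
  have hpow : ∀ j ∈ Icc 1 k,
      r * (r⁻¹ ^ (k + 1 + 1 - j) * c j) = r⁻¹ ^ (k + 1 - j) * c j := by
    intro j hj
    rw [show k + 1 + 1 - j = k + 1 - j + 1 by grind, pow_succ]
    field_simp
  simp only [potentialStep, sum_Icc_succ_top (Nat.le_add_left 1 k), mul_sub, mul_add,
    mul_sum, sum_congr rfl hpow, show k + 1 + 1 - (k + 1) = 1 by omega, pow_succ]
  field_simp
  ring

lemma potential_self : potential r c n n = 0 := by
  simp [potential]

lemma potential_sub_potential_succ {k : ℕ} (hk : k < n) :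
    potential r c n k - potential r c n (k + 1) = potentialStep r c n k := by
  rw [potential, potential, sum_eq_sum_Ico_succ_bot hk, add_sub_cancel_right]

lemma potential_recurrence (hr : r ≠ 0) {k : ℕ} (hk : 1 ≤ k) (hkn : k < n) :
    r * (potential r c n (k + 1) - potential r c n k)
      + (potential r c n (k - 1) - potential r c n k) = -c k := by
  obtain ⟨k, rfl⟩ := Nat.exists_eq_add_of_le' hk
  have hup := potential_sub_potential_succ (r := r) c n hkn
  have hdown := potential_sub_potential_succ (r := r) c n (k := k) (by omega)
  have hstep := potentialStep_succ c n hr k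
  rw [Nat.add_sub_cancel]
  linear_combination -r * hup + hdown - hstep

lemma potential_zero (hr : 1 < r) : potential r c n 0 = 0 := by
  obtain _ | m := n
  · simp [potential]
  have hr0 : r ≠ 0 := by positivity
  have hsum := sum_congr rfl fun k (_ : k ∈ range m) => potentialStep_succ c (m + 1) hr0 k
  rw [← mul_sum, sum_add_distrib, range_eq_Ico, sum_Ico_add' c, zero_add,
    Ico_add_one_right_eq_Icc, ← range_eq_Ico] at hsum
  have hB : potential r c (m + 1) 0 = ∑ k ∈ range (m + 1), potentialStep r c (m + 1) k := by
    rw [range_eq_Ico]; rfl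
  set b := potentialStep r c (m + 1)
  set B := potential r c (m + 1) 0
  -- summing `r b(k+1) = b(k) + c(k+1)` over `k < m` telescopes to `(r - 1) B = r b₀ - bₘ + ∑ c`
  have htele : (r - 1) * B = r * b 0 - b m + ∑ j ∈ Icc 1 m, c j := by
    linear_combination hsum + r * hB.trans (sum_range_succ' b m) - hB.trans (sum_range_succ b m)
  have hden : r * (1 - r⁻¹ ^ (m + 1)) = r - r⁻¹ ^ m := by
    rw [pow_succ]; field_simp
  have hden0 : r - r⁻¹ ^ m ≠ 0 := by
    have : r⁻¹ ^ m ≤ 1 := pow_le_one₀ (by positivity) (inv_le_one_of_one_le₀ hr.le)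
    linarith
  have hg : potentialOne r c (m + 1) * (r - r⁻¹ ^ m)
      = ∑ j ∈ Icc 1 m, c j - ∑ j ∈ Icc 1 m, r⁻¹ ^ (m + 1 - j) * c j := by
    rw [potentialOne, sum_mul, Nat.add_sub_cancel, ← sum_sub_distrib]
    refine sum_congr rfl fun j _ => ?_
    rw [potentialWeight, hden, mul_assoc, div_mul_cancel₀ _ hden0]
    ring
  have hb0 : b 0 = -potentialOne r c (m + 1) := by simp [b, potentialStep]
  have hbm : b m = ∑ j ∈ Icc 1 m, r⁻¹ ^ (m + 1 - j) * c j
      - potentialOne r c (m + 1) * r⁻¹ ^ m := rfl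
  have : (r - 1) * B = 0 := by
    rw [htele, hb0, hbm]
    linear_combination -hg
  exact (mul_eq_zero.mp this).resolve_left (sub_ne_zero.mpr hr.ne')

lemma potential_one (hr : 1 < r) (hn : 0 < n) :
    potential r c n 1 = potentialOne r c n := by
  have h := potential_sub_potential_succ (r := r) c n hn
  rw [potential_zero c n hr] at h
  have hstep : potentialStep r c n 0 = -potentialOne r c n := by simp [potentialStep]
  linarith

variable {n}

lemma potentialWeight_le (hr : 1 < r) (hn : 0 < n) (j : ℕ) :
    potentialWeight r n j ≤ r⁻¹ := by
  have hs0 : 0 ≤ r⁻¹ := by positivity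
  have hs1 : r⁻¹ < 1 := inv_lt_one_of_one_lt₀ hr
  have hq : 0 < 1 - r⁻¹ ^ n := sub_pos.mpr (pow_lt_one₀ hs0 hs1 hn.ne')
  have hpow : r⁻¹ ^ n ≤ r⁻¹ ^ (n - j) := pow_le_pow_of_le_one hs0 hs1.le (Nat.sub_le n j)
  rw [potentialWeight, div_le_iff₀ (by positivity), inv_mul_cancel_left₀ (by positivity)]
  linarith

lemma le_potentialWeight (hr : 1 < r) {j : ℕ} (hj : j < n) :
    (1 - r⁻¹) / r ≤ potentialWeight r n j := by
  have hs0 : 0 ≤ r⁻¹ := by positivity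
  have hs1 : r⁻¹ < 1 := inv_lt_one_of_one_lt₀ hr
  have hq : 0 < 1 - r⁻¹ ^ n := sub_pos.mpr (pow_lt_one₀ hs0 hs1 (by omega))
  have hq1 : 1 - r⁻¹ ^ n ≤ 1 := sub_le_self 1 (pow_nonneg hs0 n)
  have hpow : r⁻¹ ^ (n - j) ≤ r⁻¹ := pow_le_of_le_one hs0 hs1.le (by omega)
  rw [potentialWeight, le_div_iff₀ (by positivity)]
  calc (1 - r⁻¹) / r * (r * (1 - r⁻¹ ^ n)) = (1 - r⁻¹) * (1 - r⁻¹ ^ n) := by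
        field_simp
    _ ≤ (1 - r⁻¹) * 1 := by gcongr
    _ ≤ 1 - r⁻¹ ^ (n - j) := by linarith

end Potential

def levelCost (n Δ : ℕ) (r : ℝ) (m : ℕ → ℝ) (k : ℕ) : ℝ :=
  (r + 1) * ((n : ℝ) + (r - 1) * k) * Δ / m k

section LevelCost

variable {r : ℝ} {n : ℕ} (Δ : ℕ) {m : ℕ → ℝ}

lemma potentialOne_levelCost_le (hr : 1 < r) (hn : 0 < n)
    (hm : ∀ k ∈ Icc 1 (n - 1), 0 < m k) :
    potentialOne r (levelCost n Δ r m) n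
      ≤ (1 + 1 / r) * ((n : ℝ) + (r - 1) * n) * Δ * ∑ k ∈ Icc 1 (n - 1), 1 / m k := by
  rw [potentialOne, mul_sum]
  refine sum_le_sum fun k hk => ?_
  have hkn : (k : ℝ) ≤ n := by exact_mod_cast (by grind : k ≤ n)
  have hmk := hm k hk
  have hc : 0 ≤ levelCost n Δ r m k := by
    unfold levelCost
    have : 0 ≤ r - 1 := by linarith
    positivity
  calc levelCost n Δ r m k * potentialWeight r n k ≤ levelCost n Δ r m k * r⁻¹ :=
        mul_le_mul_of_nonneg_left (potentialWeight_le hr hn k) hc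
    _ = (1 + 1 / r) * ((n : ℝ) + (r - 1) * k) * Δ * (1 / m k) := by
        unfold levelCost
        field_simp
    _ ≤ (1 + 1 / r) * ((n : ℝ) + (r - 1) * n) * Δ * (1 / m k) := by
        have : 0 ≤ r - 1 := by linarith
        gcongr

lemma le_potentialOne_levelCost (hr : 1 < r) (hm : ∀ k ∈ Icc 1 (n - 1), 0 < m k) :
    (1 - 1 / r ^ 2) * ((n : ℝ) + (r - 1)) * Δ * ∑ k ∈ Icc 1 (n - 1), 1 / m k
      ≤ potentialOne r (levelCost n Δ r m) n := by
  rw [potentialOne, mul_sum]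
  refine sum_le_sum fun k hk => ?_
  have hk1 : (1 : ℝ) ≤ k := by exact_mod_cast (mem_Icc.mp hk).1
  have hmk := hm k hk
  have hc : 0 ≤ levelCost n Δ r m k := by unfold levelCost; positivity
  calc (1 - 1 / r ^ 2) * ((n : ℝ) + (r - 1)) * Δ * (1 / m k)
        ≤ (1 - 1 / r ^ 2) * ((n : ℝ) + (r - 1) * k) * Δ * (1 / m k) := by
        have : 0 ≤ 1 - 1 / r ^ 2 := by
          rw [sub_nonneg, div_le_one (by positivity)]; nlinarith
        gcongr
        nlinarith
    _ = levelCost n Δ r m k * ((1 - r⁻¹) / r) := by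
        unfold levelCost
        field_simp
        ring
    _ ≤ levelCost n Δ r m k * potentialWeight r n k :=
        mul_le_mul_of_nonneg_left (le_potentialWeight hr (by grind)) hc

end LevelCost

end

lemma card_filter_prod_eq_sum {α β : Type*} [Fintype α] [Fintype β] (q : α × β → Prop)
    [DecidablePred q] : #(univ.filter q) = ∑ a, #(univ.filter fun b => q (a, b)) := by
  simp only [card_filter, Fintype.sum_prod_type]

lemma card_filter_prod_eq_sum' {α β : Type*} [Fintype α] [Fintype β] (q : α × β → Prop)
    [DecidablePred q] : #(univ.filter q) = ∑ b, #(univ.filter fun a => q (a, b)) := by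
  simp only [card_filter, Fintype.sum_prod_type]
  exact sum_comm

lemma exists_edge_mem_not_mem {V : Type*} [Fintype V] (E : V → V → Prop)
    (hstrong : ∀ u v : V, Relation.ReflTransGen E u v)
    {S : Finset V} (hS : S.Nonempty) (hSu : S ≠ univ) : ∃ u ∈ S, ∃ v ∉ S, E u v := by
  obtain ⟨u, hu⟩ := hS
  obtain ⟨w, hw⟩ : ∃ w, w ∉ S := by
    by_contra! h
    exact hSu (eq_univ_iff_forall.mpr h)
  induction hstrong u w with
  | refl => exact absurd hu hw
  | @tail x w _ hxw ih =>
    by_cases hx : x ∈ S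
    · exact ⟨x, hx, w, hw, hxw⟩
    · exact ih hx

section Digraph

variable {V : Type*} [Fintype V] [DecidableEq V] (E : V → V → Prop) [DecidableRel E]

lemma degPlus_eq_sum (S : Finset V) :
    (degPlus E S : ℝ) = ∑ u, ∑ v ∈ univ.filter (fun v => E u v),
      if u ∈ S ∧ v ∉ S then 1 else 0 := by
  simp only [degPlus, card_filter_prod_eq_sum, Nat.cast_sum, natCast_card_filter, sum_filter,
    ite_and]

lemma degMinus_eq_sum (S : Finset V) :
    (degMinus E S : ℝ) = ∑ u, ∑ v ∈ univ.filter (fun v => E u v),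
      if u ∉ S ∧ v ∈ S then 1 else 0 := by
  simp only [degMinus, card_filter_prod_eq_sum, Nat.cast_sum, natCast_card_filter, sum_filter,
    ite_and]

lemma degPlus_eq_degMinus
    (hbal : ∀ v, #(univ.filter fun w => E v w) = #(univ.filter fun w => E w v))
    (S : Finset V) : degPlus E S = degMinus E S := by
  have hout : #(univ.filter fun e : V × V => E e.1 e.2 ∧ e.1 ∈ S)
      = ∑ u ∈ S, #(univ.filter fun w => E u w) := by
    rw [card_filter_prod_eq_sum, ← univ_inter S, ← sum_ite_mem]
    refine sum_congr rfl fun u _ => ?_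
    split_ifs with hu <;> simp [hu]
  have hin : #(univ.filter fun e : V × V => E e.1 e.2 ∧ e.2 ∈ S)
      = ∑ v ∈ S, #(univ.filter fun w => E w v) := by
    rw [card_filter_prod_eq_sum', ← univ_inter S, ← sum_ite_mem]
    refine sum_congr rfl fun v _ => ?_
    split_ifs with hv <;> simp [hv]
  have hsplit_out := card_filter_add_card_filter_not
    (s := univ.filter fun e : V × V => E e.1 e.2 ∧ e.1 ∈ S) (fun e => e.2 ∈ S)
  have hsplit_in := card_filter_add_card_filter_not
    (s := univ.filter fun e : V × V => E e.1 e.2 ∧ e.2 ∈ S) (fun e => e.1 ∈ S)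
  have hswap : ∀ p q : V × V → Prop, ∀ [DecidablePred p] [DecidablePred q],
      #(univ.filter fun e => E e.1 e.2 ∧ p e ∧ q e)
        = #(univ.filter fun e => E e.1 e.2 ∧ q e ∧ p e) :=
    fun p q _ _ => congrArg card (filter_congr fun _ _ => by tauto)
  simp only [filter_filter, and_assoc] at hsplit_out hsplit_in
  rw [hswap (fun e => e.2 ∈ S), hswap (fun e => e.2 ∈ S) (fun e => e.1 ∉ S)] at hsplit_in
  rw [degPlus, degMinus]
  have := sum_congr rfl fun v (_ : v ∈ S) => hbal v
  omega

lemma degPlus_pos (hstrong : ∀ u v : V, Relation.ReflTransGen E u v)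
    {S : Finset V} (hS : S.Nonempty) (hSu : S ≠ univ) : 0 < degPlus E S := by
  obtain ⟨u, hu, v, hv, huv⟩ := exists_edge_mem_not_mem E hstrong hS hSu
  exact card_pos.mpr ⟨(u, v), by simp [hu, hv, huv]⟩

lemma mul_degPlus_add_degMinus_pos {r : ℝ} (hr : 0 < r)
    (hstrong : ∀ u v : V, Relation.ReflTransGen E u v) {S : Finset V} (hS : S.Nonempty)
    (hSu : S ≠ univ) : 0 < r * degPlus E S + degMinus E S := by
  have := degPlus_pos E hstrong hS hSu
  positivity

end Digraph

lemma le_of_sum_mul_le_of_forall_le {ι : Type*} [Fintype ι] {p h : ι → ℝ} {m : ℝ}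
    (hp : ∀ i, 0 ≤ p i) (hp1 : ∑ i, p i = 1) (hm : ∀ i, m ≤ h i) (hsum : ∑ i, p i * h i ≤ m)
    {j : ι} (hj : 0 < p j) : h j ≤ m := by
  have hdev : ∑ i, p i * (h i - m) ≤ 0 := by
    simp only [mul_sub, sum_sub_distrib, ← sum_mul, hp1, one_mul]
    linarith
  have hj_dev : p j * (h j - m) ≤ 0 :=
    (single_le_sum (fun i _ => mul_nonneg (hp i) (sub_nonneg.mpr (hm i))) (mem_univ j)).trans hdev
  nlinarith

lemma card_moranStep_sub {V : Type*} [DecidableEq V] {r : ℝ} (f : ℕ → ℝ) (S : Finset V)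
    (u v : V) :
    (if u ∈ S then r else 1) * (f #(if u ∈ S then insert v S else S.erase v) - f #S)
      = r * (f (#S + 1) - f #S) * (if u ∈ S ∧ v ∉ S then 1 else 0)
        + (f (#S - 1) - f #S) * (if u ∉ S ∧ v ∈ S then 1 else 0) := by
  by_cases hu : u ∈ S <;> by_cases hv : v ∈ S <;>
    simp [hu, hv, card_insert_of_notMem, card_erase_of_mem]

lemma exists_adj_of_outdeg_eq {V : Type*} [Fintype V] (E : V → V → Prop) [DecidableRel E]
    {Δ : ℕ} (hΔ : 0 < Δ) (hout : ∀ u, #(univ.filter fun w => E u w) = Δ)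
    (u : V) : ∃ v, E u v := by
  obtain ⟨v, hv⟩ := card_pos.mp ((hout u).symm ▸ hΔ)
  exact ⟨v, by simpa using hv⟩

section Moran

variable {V : Type*} [Fintype V] [DecidableEq V] (E : V → V → Prop) [DecidableRel E] {r : ℝ}

lemma sum_fitness (r : ℝ) (S : Finset V) :
    ∑ u, (if u ∈ S then r else 1) = (Fintype.card V : ℝ) + (r - 1) * #S := by
  have h : ∀ u, (if u ∈ S then r else 1) = 1 + if u ∈ S then r - 1 else 0 := by
    intro u; split_ifs <;> ring
  simp only [h, sum_add_distrib, sum_const, card_univ, nsmul_eq_mul, mul_one, sum_ite_mem,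
    univ_inter, add_right_inj]
  ring

lemma totalFitness_nonneg (hr : 0 ≤ r) (S : Finset V) :
    0 ≤ (Fintype.card V : ℝ) + (r - 1) * #S := by
  rw [← sum_fitness]
  exact sum_nonneg fun u _ => by split_ifs <;> linarith

lemma totalFitness_pos [Nonempty V] (hr : 0 < r) (S : Finset V) :
    0 < (Fintype.card V : ℝ) + (r - 1) * #S := by
  rw [← sum_fitness]
  exact sum_pos (fun u _ => by split_ifs <;> linarith) univ_nonempty

lemma sum_moranP_mul (f : Finset V → ℝ) (S : Finset V) :
    ∑ S', moranP E r S S' * f S' = ∑ u, ∑ v ∈ univ.filter (fun v => E u v),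
      (if u ∈ S then r else 1) / (((Fintype.card V : ℝ) + (r - 1) * #S) *
        #(univ.filter fun w => E u w)) * f (if u ∈ S then insert v S else S.erase v) := by
  simp only [moranP, sum_mul, ite_mul, zero_mul]
  rw [sum_comm]
  refine sum_congr rfl fun u _ => ?_
  rw [sum_comm]
  exact sum_congr rfl fun v _ => sum_ite_eq' univ _ _ |>.trans (if_pos (mem_univ _))

lemma moranP_nonneg (hr : 0 ≤ r) (S S' : Finset V) : 0 ≤ moranP E r S S' := by
  have hW := totalFitness_nonneg hr S
  refine sum_nonneg fun u _ => sum_nonneg fun v _ => ?_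
  split_ifs <;> positivity

lemma sum_moranP [Nonempty V] (hr : 0 < r) (hE : ∀ u, ∃ v, E u v) (S : Finset V) :
    ∑ S', moranP E r S S' = 1 := by
  have hW := totalFitness_pos hr S
  have hrow : ∀ u, ∑ v ∈ univ.filter (fun v => E u v), (if u ∈ S then r else 1) /
      (((Fintype.card V : ℝ) + (r - 1) * #S) * #(univ.filter fun w => E u w))
      = (if u ∈ S then r else 1) / ((Fintype.card V : ℝ) + (r - 1) * #S) := by
    intro u
    obtain ⟨v, huv⟩ := hE u
    have hdeg : (0 : ℝ) < #(univ.filter fun w => E u w) := by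
      exact_mod_cast card_pos.mpr ⟨v, by simpa using huv⟩
    rw [sum_const, nsmul_eq_mul]
    field_simp
  have h := sum_moranP_mul E (r := r) (fun _ => 1) S
  simp only [mul_one] at h
  rw [h, sum_congr rfl fun u _ => hrow u, ← sum_div, sum_fitness]
  exact div_self hW.ne'

lemma moranP_insert_pos (hr : 0 < r) {S : Finset V} {u v : V} (hu : u ∈ S)
    (huv : E u v) : 0 < moranP E r S (insert v S) := by
  have : Nonempty V := ⟨u⟩
  have hW := totalFitness_pos hr S
  have hnonneg : ∀ u' v' : V, 0 ≤ if insert v S = (if u' ∈ S then insert v' S else S.erase v')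
      then (if u' ∈ S then r else 1) / (((Fintype.card V : ℝ) + (r - 1) * #S) *
        #(univ.filter fun w => E u' w)) else 0 := by
    intro u' v'
    split_ifs <;> positivity
  have hvN : v ∈ univ.filter fun w => E u w := by simpa using huv
  calc (0 : ℝ)
      < r / (((Fintype.card V : ℝ) + (r - 1) * #S) * #(univ.filter fun w => E u w)) := by
        have := card_pos.mpr ⟨v, hvN⟩
        positivity
    _ = _ := by rw [if_pos hu, if_pos hu, if_pos rfl]
    _ ≤ _ := single_le_sum (fun v' _ => hnonneg u v') hvN
    _ ≤ moranP E r S (insert v S) :=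
        single_le_sum (f := fun u' => ∑ v' ∈ univ.filter (fun w => E u' w), _)
          (fun u' _ => sum_nonneg fun v' _ => hnonneg u' v') (mem_univ u)

lemma sum_moranP_mul_card [Nonempty V] (hr : 0 < r) {Δ : ℕ} (hΔ : 0 < Δ)
    (hout : ∀ u, #(univ.filter fun w => E u w) = Δ) (f : ℕ → ℝ) (S : Finset V) :
    ∑ S', moranP E r S S' * f #S' = f #S + (r * (f (#S + 1) - f #S) * degPlus E S
      + (f (#S - 1) - f #S) * degMinus E S) / (((Fintype.card V : ℝ) + (r - 1) * #S) * Δ) := by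
  calc ∑ S', moranP E r S S' * f #S'
      = (∑ S', moranP E r S S') * f #S + ∑ S', moranP E r S S' * (f #S' - f #S) := by
        rw [sum_mul, ← sum_add_distrib]
        exact sum_congr rfl fun _ _ => by ring
    _ = f #S + ∑ u, ∑ v ∈ univ.filter (fun v => E u v),
          (r * (f (#S + 1) - f #S) * (if u ∈ S ∧ v ∉ S then 1 else 0)
            + (f (#S - 1) - f #S) * (if u ∉ S ∧ v ∈ S then 1 else 0))
          / (((Fintype.card V : ℝ) + (r - 1) * #S) * Δ) := by
        rw [sum_moranP E hr (exists_adj_of_outdeg_eq E hΔ hout), one_mul,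
          sum_moranP_mul E (fun S' => f #S' - f #S)]
        simp only [hout, div_mul_eq_mul_div, card_moranStep_sub]
    _ = _ := by
        simp only [degPlus_eq_sum, degMinus_eq_sum, ← sum_div, sum_add_distrib, mul_sum]

lemma nonneg_of_sum_moranP_mul_le [Nonempty V] (hr : 0 < r) (hE : ∀ u, ∃ v, E u v)
    (hstrong : ∀ u v : V, Relation.ReflTransGen E u v) {h : Finset V → ℝ}
    (h0 : 0 ≤ h ∅) (huniv : 0 ≤ h univ)
    (hsup : ∀ S, S ≠ ∅ → S ≠ univ → ∑ S', moranP E r S S' * h S' ≤ h S) (S : Finset V) :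
    0 ≤ h S := by
  obtain ⟨S₀, -, hmin⟩ := exists_min_image univ h univ_nonempty
  replace hmin : ∀ S, h S₀ ≤ h S := fun S => hmin S (mem_univ S)
  refine le_trans ?_ (hmin S)
  by_contra! hneg
  -- a minimiser that is a transient state passes the minimum on along every edge leaving it
  have hgrow : ∀ S, h S ≤ h S₀ → S ≠ univ → ∃ v ∉ S, h (insert v S) ≤ h S₀ := by
    intro S hS hSu
    have hSne : S.Nonempty := nonempty_iff_ne_empty.mpr fun h' => by subst h'; linarith
    obtain ⟨u, hu, v, hv, huv⟩ := exists_edge_mem_not_mem E hstrong hSne hSu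
    exact ⟨v, hv, le_of_sum_mul_le_of_forall_le (moranP_nonneg E hr.le S)
      (sum_moranP E hr hE S) hmin ((hsup S hSne.ne_empty hSu).trans hS)
      (moranP_insert_pos E hr hu huv)⟩
  have huniv_min : ∀ n, ∀ S, #Sᶜ = n → h S ≤ h S₀ → h univ ≤ h S₀ := by
    intro n
    induction n with
    | zero =>
      intro S hS hSmin
      rwa [← (compl_eq_empty_iff S).mp (card_eq_zero.mp hS)]
    | succ n ih =>
      intro S hS hSmin
      obtain ⟨v, hv, hvmin⟩ := hgrow S hSmin (by rintro rfl; simp at hS)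
      refine ih _ ?_ hvmin
      rw [compl_insert, card_erase_of_mem (mem_compl.mpr hv), hS, Nat.add_sub_cancel]
  linarith [huniv_min _ S₀ rfl le_rfl]

lemma sum_moranP_mul_potential [Nonempty V] (hr : 1 < r) {Δ : ℕ} (hΔ : 0 < Δ)
    (hout : ∀ u, #(univ.filter fun w => E u w) = Δ)
    (hin : ∀ u, #(univ.filter fun w => E w u) = Δ) (m : ℕ → ℝ)
    {S : Finset V} (hS : S ≠ ∅) (hSu : S ≠ univ) :
    ∑ S', moranP E r S S' * potential r (levelCost (Fintype.card V) Δ r m) (Fintype.card V) #S'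
      = potential r (levelCost (Fintype.card V) Δ r m) (Fintype.card V) #S
        - (r * degPlus E S + degMinus E S) / m #S := by
  set G := potential r (levelCost (Fintype.card V) Δ r m) (Fintype.card V)
  have hk : 1 ≤ #S := card_pos.mpr (nonempty_iff_ne_empty.mpr hS)
  have hkn : #S < Fintype.card V := (card_lt_iff_ne_univ S).mpr hSu
  have hrec := potential_recurrence (levelCost (Fintype.card V) Δ r m) (Fintype.card V)
    (by positivity : r ≠ 0) hk hkn
  have hW := totalFitness_pos (V := V) (by positivity : 0 < r) S
  rw [sum_moranP_mul_card E (by positivity) hΔ hout,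
    ← degPlus_eq_degMinus E (fun v => (hout v).trans (hin v).symm)]
  have hnum : r * (G (#S + 1) - G #S) * degPlus E S + (G (#S - 1) - G #S) * degPlus E S
      = -(levelCost (Fintype.card V) Δ r m #S) * degPlus E S := by
    linear_combination (degPlus E S : ℝ) * hrec
  rw [hnum, levelCost]
  rcases eq_or_ne (m #S) 0 with hm | hm
  · simp [hm]
  · field_simp
    ring

variable [Nonempty V] (hr : 1 < r) {Δ : ℕ} (hΔ : 0 < Δ)
  (hout : ∀ u, #(univ.filter fun w => E u w) = Δ)
  (hin : ∀ u, #(univ.filter fun w => E w u) = Δ)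
  (hstrong : ∀ u v : V, Relation.ReflTransGen E u v)
  {T : Finset V → ℝ} (hT0 : T ∅ = 0) (hTn : T univ = 0)
  (hTrec : ∀ S : Finset V, S ≠ ∅ → S ≠ univ → T S = 1 + ∑ S', moranP E r S S' * T S')
include hr hΔ hout hin hstrong hT0 hTn hTrec

lemma absorptionTime_le_potential {m : ℕ → ℝ}
    (hm : ∀ S : Finset V, S ≠ ∅ → S ≠ univ →
      0 < m #S ∧ m #S ≤ r * degPlus E S + degMinus E S)
    (S : Finset V) :
    T S ≤ potential r (levelCost (Fintype.card V) Δ r m) (Fintype.card V) #S := by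
  set G := potential r (levelCost (Fintype.card V) Δ r m) (Fintype.card V)
  suffices 0 ≤ G #S - T S by linarith
  refine nonneg_of_sum_moranP_mul_le E (by positivity) (exists_adj_of_outdeg_eq E hΔ hout)
    hstrong (h := fun S => G #S - T S) ?_ ?_ (fun S hS hSu => ?_) S
  · simp [G, hT0, potential_zero _ _ hr]
  · simp [G, hTn, potential_self]
  simp only [mul_sub, sum_sub_distrib]
  rw [sum_moranP_mul_potential E hr hΔ hout hin m hS hSu, hTrec S hS hSu]
  have := (one_le_div (hm S hS hSu).1).mpr (hm S hS hSu).2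
  linarith

lemma potential_le_absorptionTime {m : ℕ → ℝ}
    (hm : ∀ S : Finset V, S ≠ ∅ → S ≠ univ → r * degPlus E S + degMinus E S ≤ m #S)
    (S : Finset V) :
    potential r (levelCost (Fintype.card V) Δ r m) (Fintype.card V) #S ≤ T S := by
  set G := potential r (levelCost (Fintype.card V) Δ r m) (Fintype.card V)
  suffices 0 ≤ T S - G #S by linarith
  refine nonneg_of_sum_moranP_mul_le E (by positivity) (exists_adj_of_outdeg_eq E hΔ hout)
    hstrong (h := fun S => T S - G #S) ?_ ?_ (fun S hS hSu => ?_) S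
  · simp [G, hT0, potential_zero _ _ hr]
  · simp [G, hTn, potential_self]
  simp only [mul_sub, sum_sub_distrib]
  rw [sum_moranP_mul_potential E hr hΔ hout hin m hS hSu, hTrec S hS hSu]
  have hD := mul_degPlus_add_degMinus_pos E (by positivity : 0 < r) hstrong
    (nonempty_iff_ne_empty.mpr hS) hSu
  have := div_le_one_of_le₀ (hm S hS hSu) (hD.trans_le (hm S hS hSu)).le
  linarith

end Moran

end MoranProcess

open MoranProcess
open scoped BigOperators

theorem stmt_8_general {V : Type*} [Fintype V] [DecidableEq V] [Nonempty V]
    (E : V → V → Prop) [DecidableRel E]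
    (Δ : ℕ) (hΔ : 1 ≤ Δ)
    (hout : ∀ v : V, (univ.filter (fun w => E v w)).card = Δ)
    (hin : ∀ v : V, (univ.filter (fun w => E w v)).card = Δ)
    (hstrong : ∀ u v : V, Relation.ReflTransGen E u v)
    (r : ℝ) (hr : 1 < r)
    (n : ℕ) (hn : n = Fintype.card V)
    (T : Finset V → ℝ)
    (hT0 : T ∅ = 0) (hTn : T univ = 0)
    (hTrec : ∀ S : Finset V, S ≠ ∅ → S ≠ univ →
      T S = 1 + ∑ S' : Finset V, moranP E r S S' * T S')
    (mup mlo : ℕ → ℝ)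
    (hmup : ∀ k : ℕ, 1 ≤ k → k ≤ n - 1 →
      IsGreatest {x : ℝ | ∃ S : Finset V, S.card = k ∧
        x = r * (degPlus E S : ℝ) + (degMinus E S : ℝ)} (mup k))
    (hmlo : ∀ k : ℕ, 1 ≤ k → k ≤ n - 1 →
      IsLeast {x : ℝ | ∃ S : Finset V, S.card = k ∧
        x = r * (degPlus E S : ℝ) + (degMinus E S : ℝ)} (mlo k)) :
    (1 - 1 / r ^ 2) * ((n : ℝ) + (r - 1)) * (Δ : ℝ) *
        (∑ k ∈ Finset.Icc 1 (n - 1), 1 / mup k) ≤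
      (1 / (n : ℝ)) * ∑ v : V, T {v} ∧
    (1 / (n : ℝ)) * ∑ v : V, T {v} ≤
      (1 + 1 / r) * ((n : ℝ) + (r - 1) * n) * (Δ : ℝ) *
        (∑ k ∈ Finset.Icc 1 (n - 1), 1 / mlo k) := by
  subst hn
  have hcard {S : Finset V} (hS : S ≠ ∅) (hSu : S ≠ univ) :
      1 ≤ #S ∧ #S ≤ Fintype.card V - 1 :=
    ⟨card_pos.mpr (nonempty_iff_ne_empty.mpr hS),
      Nat.le_sub_one_of_lt ((card_lt_iff_ne_univ S).mpr hSu)⟩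
  have hpos {m : ℕ → ℝ} {k : ℕ} (hk : k ∈ Icc 1 (Fintype.card V - 1))
      (hmk : m k ∈ {x : ℝ | ∃ S : Finset V, #S = k ∧ x = r * degPlus E S + degMinus E S}) :
      0 < m k := by
    obtain ⟨S, rfl, hS⟩ := hmk
    rw [hS]
    exact mul_degPlus_add_degMinus_pos E (by positivity) hstrong (card_pos.mp (by grind))
      (by grind [card_univ])
  have hmean : 1 / (Fintype.card V : ℝ) * ∑ v, T {v} = 𝔼 v, T {v} := by
    rw [expect_eq_sum_div_card, card_univ, one_div_mul_eq_div]
  have hone : 0 < Fintype.card V := Fintype.card_pos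
  rw [hmean]
  constructor
  · have hmup_pos (k) (hk : k ∈ Icc 1 (Fintype.card V - 1)) : 0 < mup k :=
      hpos hk (hmup k (mem_Icc.mp hk).1 (mem_Icc.mp hk).2).1
    refine (le_potentialOne_levelCost Δ hr hmup_pos).trans (le_expect univ_nonempty fun v _ => ?_)
    rw [← potential_one _ _ hr hone, ← card_singleton v]
    exact potential_le_absorptionTime E hr hΔ hout hin hstrong hT0 hTn hTrec
      (fun S hS hSu => (hmup #S (hcard hS hSu).1 (hcard hS hSu).2).2 ⟨S, rfl, rfl⟩) _
  · have hmlo_pos (k) (hk : k ∈ Icc 1 (Fintype.card V - 1)) : 0 < mlo k :=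
      hpos hk (hmlo k (mem_Icc.mp hk).1 (mem_Icc.mp hk).2).1
    refine (expect_le univ_nonempty fun v _ => ?_).trans
      (potentialOne_levelCost_le Δ hr hone hmlo_pos)
    rw [← potential_one _ _ hr hone, ← card_singleton v]
    exact absorptionTime_le_potential E hr hΔ hout hin hstrong hT0 hTn hTrec
      (fun S hS hSu => ⟨hmlo_pos _ (mem_Icc.mpr (hcard hS hSu)),
        (hmlo #S (hcard hS hSu).1 (hcard hS hSu).2).2 ⟨S, rfl, rfl⟩⟩) _

/-- Upper and lower bounds on the expected absorption time of the Moran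
process on a strongly connected `Δ`-regular `n`-vertex digraph, in terms of
the extremal values `m_k⁺, m_k⁻` of `r·deg⁺(S) + deg⁻(S)` over states of size
`k`.  Here `T` is the expected-absorption-time function, characterized as the
solution of the one-step recurrence, and the process starts from a uniformly
random single mutant. -/
theorem stmt_8 {V : Type*} [Fintype V] [DecidableEq V] [Nonempty V]
    (E : V → V → Prop) [DecidableRel E]
    (Δ : ℕ) (hΔ : 1 ≤ Δ)
    (hout : ∀ v : V, (univ.filter (fun w => E v w)).card = Δ)
    (hin : ∀ v : V, (univ.filter (fun w => E w v)).card = Δ)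
    (hstrong : ∀ u v : V, Relation.ReflTransGen E u v)
    (r : ℝ) (hr : 1 < r)
    (n : ℕ) (hn : n = Fintype.card V) (hn2 : 2 ≤ n)
    (T : Finset V → ℝ)
    (hT0 : T ∅ = 0) (hTn : T univ = 0)
    (hTrec : ∀ S : Finset V, S ≠ ∅ → S ≠ univ →
      T S = 1 + ∑ S' : Finset V, moranP E r S S' * T S')
    (mup mlo : ℕ → ℝ)
    (hmup : ∀ k : ℕ, 1 ≤ k → k ≤ n - 1 →
      IsGreatest {x : ℝ | ∃ S : Finset V, S.card = k ∧
        x = r * (degPlus E S : ℝ) + (degMinus E S : ℝ)} (mup k))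
    (hmlo : ∀ k : ℕ, 1 ≤ k → k ≤ n - 1 →
      IsLeast {x : ℝ | ∃ S : Finset V, S.card = k ∧
        x = r * (degPlus E S : ℝ) + (degMinus E S : ℝ)} (mlo k)) :
    (1 - 1 / r ^ 2) * ((n : ℝ) + (r - 1)) * (Δ : ℝ) *
        (∑ k ∈ Finset.Icc 1 (n - 1), 1 / mup k) ≤
      (1 / (n : ℝ)) * ∑ v : V, T {v} ∧
    (1 / (n : ℝ)) * ∑ v : V, T {v} ≤
      (1 + 1 / r) * ((n : ℝ) + (r - 1) * n) * (Δ : ℝ) *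
        (∑ k ∈ Finset.Icc 1 (n - 1), 1 / mlo k) :=
  stmt_8_general E Δ hΔ hout hin hstrong r hr n hn T hT0 hTn hTrec mup mlo hmup hmlo
end

section
/- The expected absorption time of the Moran process with mutant fitness r > 1 on a strongly connected Δ-regular n-vertex digraph is at least ((r−1)/r²)·n·H_{n−1}, where H_{n−1} is the (n−1)st harmonic number. -/
open Finset

/-!
Compare the absorption time with a potential of the number of mutants: let `f` solve
`r (f (k+1) - f k) - (f k - f (k-1)) = -n/(n-k)` with `f 0 = f n = 0`. In a `Δ`-regular digraph
as many edges leave the mutant set `S` as enter it, say `c ≤ (n - k) Δ` of them, so the number of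
mutants rises with probability `r c / (W Δ)` and falls with probability `c / (W Δ)`, where the
total fitness is `W ≥ n`; hence `f (#S)` decreases by at most `1` in expectation per step. So
`T - f (#·)` is superharmonic and vanishes at `∅` and `univ`, and by strong connectivity every
transient state can lose a mutant; the minimum principle gives `T S ≥ f (#S)`. Finally
`f 1 = ∑ₖ n/(n-k) · (r^(n-1) - r^(k-1))/(r^n - 1) ≥ (r-1)/r² · n · H_{n-1}`.
-/

section Potential

variable (n : ℕ) (r : ℝ)

/- `moranPotential n r` is the `f` above: its increments `d j = f (j+1) - f j` solve
`d (k-1) = r d k + n/(n-k)` backwards from `d (n-1) = moranPotentialConst n r`, and that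
constant is chosen to make `f n = 0`. -/
noncomputable def moranPotentialConst : ℝ :=
  -(∑ k ∈ Icc 1 (n - 1), (n : ℝ) / (n - k) * (r ^ k - 1)) / (r ^ n - 1)

noncomputable def moranPotentialIncrement (j : ℕ) : ℝ :=
  ∑ k ∈ Icc (j + 1) (n - 1), r ^ (k - 1 - j) * ((n : ℝ) / (n - k)) +
    r ^ (n - 1 - j) * moranPotentialConst n r

noncomputable def moranPotential (m : ℕ) : ℝ :=
  ∑ j ∈ range m, moranPotentialIncrement n r j

lemma moranPotentialIncrement_eq_mul_succ_add {j : ℕ} (hj : j + 1 < n) :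
    moranPotentialIncrement n r j =
      r * moranPotentialIncrement n r (j + 1) + n / (n - (j + 1 : ℕ)) := by
  have hexp : ∀ k ∈ Icc (j + 1 + 1) (n - 1),
      r ^ (k - 1 - j) * ((n : ℝ) / (n - k)) = r * (r ^ (k - 1 - (j + 1)) * (n / (n - k))) := by
    intro k hk
    rw [mem_Icc] at hk
    rw [show k - 1 - j = k - 1 - (j + 1) + 1 by omega, pow_succ]
    ring
  rw [moranPotentialIncrement, moranPotentialIncrement,
    ← insert_Icc_add_one_left_eq_Icc (by omega : j + 1 ≤ n - 1), sum_insert (by simp), sum_congr rfl hexp, ← mul_sum,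
    show n - 1 - j = n - 1 - (j + 1) + 1 by omega, pow_succ, show j + 1 - 1 - j = 0 by omega]
  ring

lemma moranPotential_drift {k : ℕ} (hk : 1 ≤ k) (hkn : k < n) :
    r * (moranPotential n r (k + 1) - moranPotential n r k) -
      (moranPotential n r k - moranPotential n r (k - 1)) = -(n / (n - k)) := by
  obtain ⟨j, rfl⟩ : ∃ j, k = j + 1 := ⟨k - 1, by omega⟩
  simp only [moranPotential, sum_range_succ, Nat.add_sub_cancel]
  rw [moranPotentialIncrement_eq_mul_succ_add n r hkn]
  ring

lemma moranPotential_self (hr : 1 < r) : moranPotential n r n = 0 := by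
  rcases n.eq_zero_or_pos with rfl | hn
  · simp [moranPotential]
  have hr1 : r - 1 ≠ 0 := by linarith
  have hrn : r ^ n - 1 ≠ 0 := by linarith [one_lt_pow₀ hr hn.ne']
  unfold moranPotential moranPotentialIncrement
  rw [sum_add_distrib, ← sum_mul]
  have hgeom : ∑ j ∈ range n, r ^ (n - 1 - j) = (r ^ n - 1) / (r - 1) := by
    rw [sum_range_reflect (r ^ ·) n, geom_sum_eq hr.ne']
  have hswap : (∑ j ∈ range n, ∑ k ∈ Icc (j + 1) (n - 1), r ^ (k - 1 - j) * ((n : ℝ) / (n - k)))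
      = ∑ k ∈ Icc 1 (n - 1), (r ^ k - 1) / (r - 1) * ((n : ℝ) / (n - k)) := by
    rw [sum_comm' (t' := Icc 1 (n - 1)) (s' := range)
      (by intro j k; simp only [mem_range, mem_Icc]; omega)]
    refine sum_congr rfl fun k _ => ?_
    rw [← sum_mul, sum_range_reflect (r ^ ·) k, geom_sum_eq hr.ne']
  have hfactor : ∑ k ∈ Icc 1 (n - 1), (r ^ k - 1) / (r - 1) * ((n : ℝ) / (n - k)) =
      (∑ k ∈ Icc 1 (n - 1), (n : ℝ) / (n - k) * (r ^ k - 1)) / (r - 1) := by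
    rw [sum_div]
    exact sum_congr rfl fun k _ => by ring
  rw [hgeom, hswap, hfactor, moranPotentialConst]
  field_simp
  ring

lemma sum_Icc_div_sub_eq_mul_harmonic :
    ∑ k ∈ Icc 1 (n - 1), (n : ℝ) / (n - k) = n * ∑ i ∈ Icc 1 (n - 1), (1 : ℝ) / i := by
  rw [mul_sum]
  refine sum_nbij' (n - ·) (n - ·) ?_ ?_ ?_ ?_ ?_ <;> intro k hk <;> simp only [mem_Icc] at hk ⊢
  · omega
  · omega
  · omega
  · omega
  · rw [Nat.cast_sub (by omega)]; ring

lemma div_sq_le_pow_sub_pow_div {r : ℝ} (hr : 1 < r) {k m : ℕ} (hkm : k ≤ m) :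
    (r - 1) / r ^ 2 ≤ (r ^ (m + 1) - r ^ k) / (r ^ (m + 2) - 1) := by
  have hrm : 1 < r ^ (m + 2) := one_lt_pow₀ hr (by omega)
  rw [div_le_div_iff₀ (by positivity) (by linarith)]
  have hk : r ^ k ≤ r ^ m := pow_le_pow_right₀ hr.le hkm
  have hsplit : (r ^ (m + 1) - r ^ m) * r ^ 2 = (r - 1) * r ^ (m + 2) := by ring
  nlinarith [pow_pos (by linarith : (0 : ℝ) < r) 2]

lemma moranPotentialIncrement_zero_eq (hr : 1 < r) :
    moranPotentialIncrement n r 0 =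
      ∑ k ∈ Icc 1 (n - 1), (n : ℝ) / (n - k) * ((r ^ (n - 1) - r ^ (k - 1)) / (r ^ n - 1)) := by
  rw [moranPotentialIncrement, moranPotentialConst, neg_div, sum_div, mul_neg, mul_sum,
    ← sum_neg_distrib, ← sum_add_distrib]
  refine sum_congr rfl fun k hk => ?_
  rw [mem_Icc] at hk
  obtain ⟨m, rfl⟩ : ∃ m, n = m + 2 := ⟨n - 2, by omega⟩
  obtain ⟨k, rfl⟩ : ∃ k', k = k' + 1 := ⟨k - 1, by omega⟩
  have hrm : r ^ (m + 2) - 1 ≠ 0 := by linarith [one_lt_pow₀ hr (by omega : m + 2 ≠ 0)]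
  simp only [show m + 2 - 1 = m + 1 by omega, Nat.add_sub_cancel, Nat.sub_zero]
  field_simp
  ring

lemma mul_harmonic_le_moranPotentialIncrement_zero (hr : 1 < r) :
    (r - 1) / r ^ 2 * n * ∑ i ∈ Icc 1 (n - 1), (1 : ℝ) / i ≤ moranPotentialIncrement n r 0 := by
  rw [moranPotentialIncrement_zero_eq n r hr, mul_assoc, ← sum_Icc_div_sub_eq_mul_harmonic, mul_sum]
  refine sum_le_sum fun k hk => ?_
  rw [mem_Icc] at hk
  obtain ⟨m, rfl⟩ : ∃ m, n = m + 2 := ⟨n - 2, by omega⟩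
  obtain ⟨k, rfl⟩ : ∃ k', k = k' + 1 := ⟨k - 1, by omega⟩
  have hcoeff := div_sq_le_pow_sub_pow_div hr (k := k) (m := m) (by omega)
  have he : (0 : ℝ) ≤ (m + 2 : ℕ) / ((m + 2 : ℕ) - (k + 1 : ℕ) : ℝ) := by
    apply div_nonneg (by positivity)
    rw [sub_nonneg]; exact_mod_cast (by omega : k + 1 ≤ m + 2)
  simp only [show m + 2 - 1 = m + 1 by omega, Nat.add_sub_cancel]
  rw [mul_comm]
  exact mul_le_mul_of_nonneg_left hcoeff he

end Potential


section MinimumPrinciple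

variable {α : Type*} [Fintype α] {P : α → α → ℝ} {h : α → ℝ}

lemma eq_of_sum_mul_le_of_forall_le {s t : α} (hP : ∀ t, 0 ≤ P s t) (hP1 : ∑ t, P s t = 1)
    (hsuper : ∑ t, P s t * h t ≤ h s) (hmin : ∀ t, h s ≤ h t) (hst : 0 < P s t) :
    h t = h s := by
  have hterm : ∀ t ∈ univ, 0 ≤ P s t * (h t - h s) :=
    fun t _ => mul_nonneg (hP t) (sub_nonneg.2 (hmin t))
  have hsum : ∑ t, P s t * (h t - h s) = 0 := by
    refine le_antisymm ?_ (sum_nonneg hterm)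
    simp only [mul_sub, sum_sub_distrib, ← sum_mul, hP1, one_mul]
    linarith
  rcases mul_eq_zero.1 ((sum_eq_zero_iff_of_nonneg hterm).1 hsum t (mem_univ t)) with h0 | h0
  · exact absurd h0 hst.ne'
  · linarith

/- Minimum principle: a function that is superharmonic off the boundary `¬p` and nonnegative on
it is nonnegative, provided that from every interior state the chain can lower `rank`. -/
lemma nonneg_of_forall_sum_mul_le {p : α → Prop} (rank : α → ℕ)
    (hP : ∀ s, p s → ∀ t, 0 ≤ P s t) (hP1 : ∀ s, p s → ∑ t, P s t = 1)
    (hsuper : ∀ s, p s → ∑ t, P s t * h t ≤ h s)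
    (hdesc : ∀ s, p s → ∃ t, 0 < P s t ∧ rank t < rank s)
    (hbdry : ∀ s, ¬p s → 0 ≤ h s) (s : α) : 0 ≤ h s := by
  obtain ⟨s₀, -, hs₀⟩ := exists_min_image univ h ⟨s, mem_univ s⟩
  suffices ∀ s, h s = h s₀ → 0 ≤ h s from (this s₀ rfl).trans (hs₀ s (mem_univ s))
  intro s
  induction s using (measure rank).wf.induction with
  | h s ih =>
    intro hs
    by_cases hps : p s
    · obtain ⟨t, hst, hrank⟩ := hdesc s hps
      have hmin : ∀ t, h s ≤ h t := fun t => hs ▸ hs₀ t (mem_univ t)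
      have hts := eq_of_sum_mul_le_of_forall_le (hP s hps) (hP1 s hps) (hsuper s hps) hmin hst
      exact hts ▸ ih t hrank (hts.trans hs)
    · exact hbdry s hps

end MinimumPrinciple

lemma exists_rel_of_reflTransGen {α : Type*} {E : α → α → Prop} {S : Set α} {a b : α}
    (hab : Relation.ReflTransGen E b a) (hb : b ∉ S) (ha : a ∈ S) :
    ∃ u v, u ∉ S ∧ v ∈ S ∧ E u v := by
  by_contra! hcut
  induction hab with
  | refl => exact hb ha
  | tail _ hcd ih => exact hcut _ _ (fun hc => ih hc) ha hcd

section Moran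

variable {V : Type*}

def edgesBetween (E : V → V → Prop) [DecidableRel E] (A B : Finset V) : ℕ :=
  ∑ u ∈ A, #(B.filter fun v => E u v)

variable {E : V → V → Prop} [DecidableRel E]

lemma sum_sum_filter_eq_edgesBetween_mul {A B : Finset V} {F : V → V → ℝ} {c : ℝ}
    (hF : ∀ u ∈ A, ∀ v ∈ B, F u v = c) :
    ∑ u ∈ A, ∑ v ∈ B.filter (fun v => E u v), F u v = edgesBetween E A B * c := by
  rw [edgesBetween, Nat.cast_sum, sum_mul]
  refine sum_congr rfl fun u hu => ?_
  rw [sum_congr rfl fun v hv => hF u hu v (mem_filter.1 hv).1, sum_const, nsmul_eq_mul]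

variable [Fintype V]

lemma card_add_sub_one_mul_card_pos [Nonempty V] {r : ℝ} (hr : 0 < r) (S : Finset V) :
    0 < (Fintype.card V : ℝ) + (r - 1) * #S := by
  have hS : (#S : ℝ) ≤ Fintype.card V := by exact_mod_cast card_le_univ S
  rcases S.eq_empty_or_nonempty with rfl | hne
  · simpa using Fintype.card_pos (α := V)
  · have : (0 : ℝ) < #S := by exact_mod_cast hne.card_pos
    nlinarith

variable [DecidableEq V] {Δ : ℕ}

lemma edgesBetween_add_compl_right (hout : ∀ v, #(univ.filter fun w => E v w) = Δ)
    (A B : Finset V) : edgesBetween E A B + edgesBetween E A Bᶜ = #A * Δ := by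
  rw [edgesBetween, edgesBetween, ← sum_add_distrib, ← smul_eq_mul, ← sum_const]
  refine sum_congr rfl fun u _ => ?_
  rw [← card_union_of_disjoint (disjoint_filter_filter disjoint_compl_right), ← filter_union,
    union_compl, hout]

lemma edgesBetween_add_compl_left (hin : ∀ v, #(univ.filter fun w => E w v) = Δ)
    (A B : Finset V) : edgesBetween E A B + edgesBetween E Aᶜ B = #B * Δ := by
  rw [edgesBetween, edgesBetween, sum_add_sum_compl, ← smul_eq_mul, ← sum_const]
  simp only [card_filter]
  rw [sum_comm]
  exact sum_congr rfl fun v _ => by rw [← card_filter, hin]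

lemma edgesBetween_le (hout : ∀ v, #(univ.filter fun w => E v w) = Δ) (A B : Finset V) :
    edgesBetween E A B ≤ #A * Δ :=
  (edgesBetween_add_compl_right hout A B).symm ▸ Nat.le_add_right _ _

lemma edgesBetween_compl_comm (hout : ∀ v, #(univ.filter fun w => E v w) = Δ)
    (hin : ∀ v, #(univ.filter fun w => E w v) = Δ) (S : Finset V) :
    edgesBetween E S Sᶜ = edgesBetween E Sᶜ S := by
  have := edgesBetween_add_compl_right hout S S
  have := edgesBetween_add_compl_left hin S S
  omega

lemma sum_sum_filter_eq_add_compl (F : V → V → ℝ) (S : Finset V) :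
    ∑ u, ∑ v ∈ univ.filter (fun v => E u v), F u v =
      ∑ u ∈ S, ∑ v ∈ S.filter (fun v => E u v), F u v +
      ∑ u ∈ S, ∑ v ∈ Sᶜ.filter (fun v => E u v), F u v +
      (∑ u ∈ Sᶜ, ∑ v ∈ S.filter (fun v => E u v), F u v +
      ∑ u ∈ Sᶜ, ∑ v ∈ Sᶜ.filter (fun v => E u v), F u v) := by
  rw [← sum_add_sum_compl S]
  simp only [sum_filter]
  simp only [← sum_add_sum_compl S, sum_add_distrib]

lemma moranP_nonneg [Nonempty V] {r : ℝ} (hr : 0 < r) (S S' : Finset V) :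
    0 ≤ moranP E r S S' := by
  have := card_add_sub_one_mul_card_pos hr S
  refine sum_nonneg fun u _ => sum_nonneg fun v _ => ?_
  split_ifs <;> positivity

lemma moranP_erase_pos [Nonempty V] {r : ℝ} (hr : 0 < r) {S : Finset V} {u v : V}
    (hu : u ∉ S) (huv : E u v) : 0 < moranP E r S (S.erase v) := by
  have := card_add_sub_one_mul_card_pos hr S
  have hdeg : 0 < #(univ.filter fun w => E u w) := card_pos.2 ⟨v, by simpa using huv⟩
  refine sum_pos' (fun u' _ => sum_nonneg fun v' _ => ?_) ⟨u, mem_univ u, ?_⟩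
  · split_ifs <;> positivity
  refine sum_pos' (fun v' _ => ?_) ⟨v, by simpa using huv, ?_⟩
  · split_ifs <;> positivity
  · simp only [hu, if_false, if_true]
    positivity

lemma sum_moranP_mul (r : ℝ) (S : Finset V) (F : Finset V → ℝ) :
    ∑ S', moranP E r S S' * F S' =
      ∑ u, ∑ v ∈ univ.filter (fun v => E u v),
        (if u ∈ S then r else 1) /
          (((Fintype.card V : ℝ) + (r - 1) * #S) * #(univ.filter fun w => E u w)) *
        F (if u ∈ S then insert v S else S.erase v) := by
  simp only [moranP, sum_mul, ite_mul, zero_mul]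
  rw [sum_comm]
  refine sum_congr rfl fun u _ => ?_
  rw [sum_comm]
  exact sum_congr rfl fun v _ => sum_ite_eq' univ _ _ |>.trans (if_pos (mem_univ _))

lemma sum_moranP_mul_card [Nonempty V] (hout : ∀ v, #(univ.filter fun w => E v w) = Δ)
    (hin : ∀ v, #(univ.filter fun w => E w v) = Δ) (hΔ : 0 < Δ) {r : ℝ} (hr : 0 < r)
    (S : Finset V) (g : ℕ → ℝ) :
    ∑ S', moranP E r S S' * g #S' =
      g #S + edgesBetween E Sᶜ S / (((Fintype.card V : ℝ) + (r - 1) * #S) * Δ) *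
        (r * (g (#S + 1) - g #S) - (g #S - g (#S - 1))) := by
  set W := (Fintype.card V : ℝ) + (r - 1) * #S
  have hW : W ≠ 0 := (card_add_sub_one_mul_card_pos hr S).ne'
  -- On each block of edges `u → v`, split by `u ∈ S` and `v ∈ S`, the step changes `#S` by a
  -- fixed amount: `0`, `+1`, `-1`, `0`.
  rw [sum_moranP_mul, sum_sum_filter_eq_add_compl _ S]
  simp only [hout]
  rw [sum_sum_filter_eq_edgesBetween_mul (c := r / (W * Δ) * g #S),
    sum_sum_filter_eq_edgesBetween_mul (c := r / (W * Δ) * g (#S + 1)),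
    sum_sum_filter_eq_edgesBetween_mul (c := 1 / (W * Δ) * g (#S - 1)),
    sum_sum_filter_eq_edgesBetween_mul (c := 1 / (W * Δ) * g #S)]
  · have hSS : (edgesBetween E S S : ℝ) + edgesBetween E S Sᶜ = #S * Δ := by
      exact_mod_cast edgesBetween_add_compl_right hout S S
    have hScSc : (edgesBetween E Sᶜ Sᶜ : ℝ) + edgesBetween E Sᶜ S =
        (Fintype.card V - #S) * Δ := by
      have h := edgesBetween_add_compl_right hout Sᶜ Sᶜ
      rw [compl_compl] at h
      rw [← card_compl_add_card S]
      push_cast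
      rw [add_sub_cancel_right]
      exact_mod_cast h
    have hcomm : (edgesBetween E S Sᶜ : ℝ) = edgesBetween E Sᶜ S := by
      exact_mod_cast edgesBetween_compl_comm hout hin S
    rw [eq_sub_of_add_eq hSS, eq_sub_of_add_eq hScSc, hcomm]
    field_simp
    ring
  all_goals
    intro u hu v hv
    simp_all [W]

lemma sum_moranP_eq_one [Nonempty V] (hout : ∀ v, #(univ.filter fun w => E v w) = Δ)
    (hin : ∀ v, #(univ.filter fun w => E w v) = Δ) (hΔ : 0 < Δ) {r : ℝ} (hr : 0 < r)
    (S : Finset V) : ∑ S', moranP E r S S' = 1 := by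
  simpa using sum_moranP_mul_card hout hin hΔ hr S fun _ => 1

lemma moranPotential_card_le_one_add_sum [Nonempty V]
    (hout : ∀ v, #(univ.filter fun w => E v w) = Δ)
    (hin : ∀ v, #(univ.filter fun w => E w v) = Δ) (hΔ : 0 < Δ) {r : ℝ} (hr : 1 < r)
    {S : Finset V} (hS : S ≠ ∅) (hSu : S ≠ univ) :
    moranPotential (Fintype.card V) r #S ≤
      1 + ∑ S', moranP E r S S' * moranPotential (Fintype.card V) r #S' := by
  set n := Fintype.card V
  have hk : 1 ≤ #S := card_pos.2 (nonempty_iff_ne_empty.2 hS)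
  have hkn : #S < n := by simpa using card_lt_card (ssubset_univ_iff.2 hSu)
  rw [sum_moranP_mul_card hout hin hΔ (by linarith) S, moranPotential_drift n r hk hkn]
  have hc : (edgesBetween E Sᶜ S : ℝ) ≤ #Sᶜ * Δ := by
    exact_mod_cast edgesBetween_le hout Sᶜ S
  rw [card_compl, Nat.cast_sub (card_le_univ S)] at hc
  have hnk : (0 : ℝ) < n - #S := by
    rw [sub_pos]; exact_mod_cast hkn
  have hW : (n : ℝ) ≤ n + (r - 1) * #S := by
    have : (0 : ℝ) ≤ (r - 1) * #S := mul_nonneg (by linarith) (Nat.cast_nonneg _)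
    linarith
  have hΔ' : (0 : ℝ) < Δ := by exact_mod_cast hΔ
  have hdrift : edgesBetween E Sᶜ S / ((n + (r - 1) * #S) * Δ) * (n / (n - #S)) ≤ (1 : ℝ) := by
    rw [div_mul_div_comm, div_le_one (by positivity)]
    calc (edgesBetween E Sᶜ S : ℝ) * n ≤ (n - #S) * Δ * n := by gcongr
      _ ≤ (n - #S) * Δ * (n + (r - 1) * #S) := by gcongr
      _ = _ := by ring
  linarith

lemma moranPotential_card_le [Nonempty V]
    (hout : ∀ v, #(univ.filter fun w => E v w) = Δ)
    (hin : ∀ v, #(univ.filter fun w => E w v) = Δ) (hΔ : 0 < Δ)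
    (hstrong : ∀ u v, Relation.ReflTransGen E u v) {r : ℝ} (hr : 1 < r) {T : Finset V → ℝ}
    (hT0 : T ∅ = 0) (hTn : T univ = 0)
    (hTrec : ∀ S : Finset V, S ≠ ∅ → S ≠ univ → T S = 1 + ∑ S', moranP E r S S' * T S')
    (S : Finset V) : moranPotential (Fintype.card V) r #S ≤ T S := by
  have hr0 : 0 < r := by linarith
  refine sub_nonneg.1 <| nonneg_of_forall_sum_mul_le (P := moranP E r)
    (h := fun S => T S - moranPotential (Fintype.card V) r #S) (p := fun S => S ≠ ∅ ∧ S ≠ univ)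
    card (fun S _ => moranP_nonneg hr0 S) (fun S _ => sum_moranP_eq_one hout hin hΔ hr0 S)
    (fun S ⟨hS, hSu⟩ => ?_) (fun S ⟨hS, hSu⟩ => ?_) (fun S hS => ?_) S
  · have hdrift := moranPotential_card_le_one_add_sum hout hin hΔ hr hS hSu
    simp only [mul_sub, sum_sub_distrib]
    linarith [hTrec S hS hSu]
  · obtain ⟨a, ha⟩ := nonempty_iff_ne_empty.2 hS
    obtain ⟨b, hb⟩ := not_forall.1 fun h => hSu (eq_univ_of_forall h)
    obtain ⟨u, v, hu, hv, huv⟩ := exists_rel_of_reflTransGen (S := S) (hstrong b a) hb ha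
    exact ⟨S.erase v, moranP_erase_pos hr0 hu huv, card_erase_lt_of_mem hv⟩
  · rcases not_and_or.1 hS with hS | hS <;> rw [not_not] at hS <;> subst hS
    · simp [hT0, moranPotential]
    · simp [hTn, moranPotential_self _ _ hr]

end Moran

theorem stmt_9_general {V : Type*} [Fintype V] [DecidableEq V] [Nonempty V]
    (E : V → V → Prop) [DecidableRel E]
    (Δ : ℕ) (hΔ : 1 ≤ Δ)
    (hout : ∀ v : V, (univ.filter (fun w => E v w)).card = Δ)
    (hin : ∀ v : V, (univ.filter (fun w => E w v)).card = Δ)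
    (hstrong : ∀ u v : V, Relation.ReflTransGen E u v)
    (r : ℝ) (hr : 1 < r)
    (n : ℕ) (hn : n = Fintype.card V)
    (T : Finset V → ℝ)
    (hT0 : T ∅ = 0) (hTn : T univ = 0)
    (hTrec : ∀ S : Finset V, S ≠ ∅ → S ≠ univ →
      T S = 1 + ∑ S' : Finset V, moranP E r S S' * T S') :
    ((r - 1) / r ^ 2) * (n : ℝ) * (∑ i ∈ Finset.Icc 1 (n - 1), (1 : ℝ) / i) ≤
      (1 / (n : ℝ)) * ∑ v : V, T {v} := by
  subst hn
  calc (r - 1) / r ^ 2 * Fintype.card V * ∑ i ∈ Icc 1 (Fintype.card V - 1), (1 : ℝ) / i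
      ≤ moranPotentialIncrement (Fintype.card V) r 0 :=
        mul_harmonic_le_moranPotentialIncrement_zero _ r hr
    _ = 1 / Fintype.card V * ∑ v : V, moranPotential (Fintype.card V) r #{v} := by
        simp [moranPotential]
    _ ≤ 1 / Fintype.card V * ∑ v : V, T {v} := by
        gcongr with v
        exact moranPotential_card_le hout hin hΔ hstrong hr hT0 hTn hTrec {v}

/-- The expected absorption time of the Moran process with mutant fitness
`r > 1` on a strongly connected `Δ`-regular `n`-vertex digraph, started from a
uniformly random single mutant, is at least `((r-1)/r²)·n·H_{n-1}`.  Here `T`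
is the expected-absorption-time function, characterized as the solution of the
one-step recurrence. -/
theorem stmt_9 {V : Type*} [Fintype V] [DecidableEq V] [Nonempty V]
    (E : V → V → Prop) [DecidableRel E]
    (Δ : ℕ) (hΔ : 1 ≤ Δ)
    (hout : ∀ v : V, (univ.filter (fun w => E v w)).card = Δ)
    (hin : ∀ v : V, (univ.filter (fun w => E w v)).card = Δ)
    (hstrong : ∀ u v : V, Relation.ReflTransGen E u v)
    (r : ℝ) (hr : 1 < r)
    (n : ℕ) (hn : n = Fintype.card V) (hn2 : 2 ≤ n)
    (T : Finset V → ℝ)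
    (hT0 : T ∅ = 0) (hTn : T univ = 0)
    (hTrec : ∀ S : Finset V, S ≠ ∅ → S ≠ univ →
      T S = 1 + ∑ S' : Finset V, moranP E r S S' * T S') :
    ((r - 1) / r ^ 2) * (n : ℝ) * (∑ i ∈ Finset.Icc 1 (n - 1), (1 : ℝ) / i) ≤
      (1 / (n : ℝ)) * ∑ v : V, T {v} :=
  stmt_9_general E Δ hΔ hout hin hstrong r hr n hn T hT0 hTn hTrec
end

section
/- Consider the continuous-time Moran process on a digraph G, where each mutant vertex reproduces at rate r and each non-mutant at rate 1, and a reproducing vertex copies its state to a uniformly random out-neighbour. If Y ⊆ Y′ ⊆ V(G) and 1 ≤ r ≤ r′, then there is a coupling of the process started at Y with fitness r and the process started at Y′ with fitness r′ such that almost surely the first process's mutant set is contained in the second's at all times t ≥ 0. -/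
/-!
Build one Markov chain on pairs `(A, B)` that runs both Moran processes at once. For every vertex
`u` and out-neighbour `v`, the clocks of `u` in the two copies ring together at the smaller of the
two rates and the faster clock also rings alone at the excess rate. From a pair with `A ⊆ B` a
joint firing keeps `A ⊆ B`; the only dangerous solo firings are a mutant of `A` firing in the
first copy or a non-mutant of `B` firing in the second, and both have rate zero since `r ≤ r'`.
Hence the generator `N` of the pair chain has nonnegative off-diagonal entries, never leads out
of `{A ⊆ B}`, and projects onto the two Moran generators. For `C t = exp (t • N)` these facts
become nonnegativity, invariance of `{A ⊆ B}` and the marginal identities, because the given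
`P t` equals `exp (t • Q)` by uniqueness of solutions of the backward equation.
-/

open Finset NormedSpace
open scoped Nat

namespace Matrix

variable {l m n : Type*}

/- Matrices carry no canonical norm; the statements below are norm-free, so any submultiplicative
norm may be used locally to access the Banach-algebra facts about `exp`. -/
theorem hasSum_exp [Fintype n] [DecidableEq n] (M : Matrix n n ℝ) :
    HasSum (fun k : ℕ => (k !⁻¹ : ℝ) • M ^ k) (exp M) := by
  let := Matrix.linftyOpNormedRing (n := n) (α := ℝ)
  let := Matrix.linftyOpNormedAlgebra (n := n) (R := ℝ) (α := ℝ)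
  rw [exp_eq_tsum ℝ]
  exact (expSeries_summable' M).hasSum

theorem hasDerivAt_exp_smul_apply [Fintype n] [DecidableEq n] (A : Matrix n n ℝ) (t : ℝ)
    (i j : n) : HasDerivAt (fun s : ℝ => exp (s • A) i j) ((A * exp (t • A)) i j) t := by
  let := Matrix.linftyOpNormedRing (n := n) (α := ℝ)
  let := Matrix.linftyOpNormedAlgebra (n := n) (R := ℝ) (α := ℝ)
  exact (entryLinearMap ℝ ℝ i j).toContinuousLinearMap.hasFDerivAt.comp_hasDerivAt t
    (hasDerivAt_exp_smul_const' A t)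

theorem mul_apply_nonneg [Fintype m] {A : Matrix n m ℝ} {B : Matrix m l ℝ}
    (hA : ∀ i j, 0 ≤ A i j) (hB : ∀ i j, 0 ≤ B i j) (i : n) (k : l) : 0 ≤ (A * B) i k :=
  sum_nonneg fun j _ => mul_nonneg (hA i j) (hB j k)

theorem exp_apply_nonneg [Fintype n] [DecidableEq n] {M : Matrix n n ℝ}
    (hM : ∀ i j, 0 ≤ M i j) (i j : n) : 0 ≤ exp M i j :=
  (Pi.hasSum.1 (Pi.hasSum.1 (hasSum_exp M) i) j).nonneg fun k =>
    mul_nonneg (by positivity) (pow_apply_nonneg hM k i j)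

/-- Shifting by a large scalar makes `M` entrywise nonnegative and only rescales `exp M` by a
positive factor. -/
theorem exp_apply_nonneg_of_offDiag_nonneg [Fintype n] [DecidableEq n] {M : Matrix n n ℝ}
    (hM : ∀ i j, i ≠ j → 0 ≤ M i j) (i j : n) : 0 ≤ exp M i j := by
  set c := ∑ k, |M k k|
  have hshift : ∀ i j, 0 ≤ (M + scalar n c) i j := by
    intro i j
    obtain rfl | hij := eq_or_ne i j
    · have : |M i i| ≤ c :=
        single_le_sum (f := fun k => |M k k|) (fun _ _ => abs_nonneg _) (mem_univ i)
      simp only [add_apply, scalar_apply, diagonal_apply_eq]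
      linarith [neg_abs_le (M i i)]
    · simpa [scalar_apply, hij] using hM i j hij
  have hscalar : ∀ i j, 0 ≤ exp (scalar n (-c)) i j := by
    intro i j
    rw [scalar_apply, exp_diagonal]
    obtain rfl | hij := eq_or_ne i j
    · simp [Pi.coe_exp, ← Real.exp_eq_exp_ℝ, Real.exp_nonneg]
    · simp [hij]
  have hsplit : exp M = exp (M + scalar n c) * exp (scalar n (-c)) := by
    rw [← exp_add_of_commute _ _ (scalar_commute _ (fun _ => Commute.all _ _) _).symm,
      map_neg, add_neg_cancel_right]
  rw [hsplit]
  exact mul_apply_nonneg (exp_apply_nonneg hshift) hscalar i j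

theorem exp_apply_eq_zero_of_invariant [Fintype n] [DecidableEq n] {M : Matrix n n ℝ}
    {Good : n → Prop} [DecidablePred Good] (hM : ∀ i j, Good i → ¬ Good j → M i j = 0) {i j : n}
    (hi : Good i) (hj : ¬ Good j) : exp M i j = 0 := by
  have hM' : M.BlockTriangular fun k => decide (Good k) := by
    intro i j hij
    simp only [Bool.lt_iff, decide_eq_false_iff_not, decide_eq_true_eq] at hij
    exact hM i j hij.2 hij.1
  exact hM'.exp (by simpa [Bool.lt_iff] using ⟨hj, hi⟩)

theorem exp_mul_eq_mul_exp_of_mul_eq [Fintype n] [DecidableEq n] [Fintype m] [DecidableEq m]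
    {M : Matrix n n ℝ} {K : Matrix m m ℝ} {R : Matrix n m ℝ} (h : M * R = R * K) :
    exp M * R = R * exp K := by
  have hpow : ∀ k : ℕ, M ^ k * R = R * K ^ k := by
    intro k
    induction k with
    | zero => simp
    | succ k ih => rw [pow_succ, pow_succ, Matrix.mul_assoc, h, ← Matrix.mul_assoc, ih,
        Matrix.mul_assoc]
  have hM := (hasSum_exp M).map (mulRightLinearMap n ℝ R)
    (continuous_id.matrix_mul continuous_const)
  have hK := (hasSum_exp K).map (mulLeftLinearMap m ℝ R)
    (continuous_const.matrix_mul continuous_id)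
  refine hM.unique ?_
  convert hK using 1
  · funext k
    simp [hpow]
  · rfl

theorem hasDerivAt_mul_apply [Fintype m] {A : ℝ → Matrix n m ℝ} {B : ℝ → Matrix m l ℝ}
    {A' : Matrix n m ℝ} {B' : Matrix m l ℝ} {t : ℝ}
    (hA : ∀ i j, HasDerivAt (fun s => A s i j) (A' i j) t)
    (hB : ∀ i j, HasDerivAt (fun s => B s i j) (B' i j) t) (i : n) (k : l) :
    HasDerivAt (fun s => (A s * B s) i k) ((A' * B t + A t * B') i k) t := by
  simp only [mul_apply, add_apply, ← sum_add_distrib]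
  exact HasDerivAt.fun_sum fun j _ => (hA i j).mul (hB j k)

theorem eq_exp_smul_of_hasDerivAt [Fintype n] [DecidableEq n] {Q : Matrix n n ℝ}
    {P : ℝ → Matrix n n ℝ} (hP0 : P 0 = 1)
    (hP : ∀ t i j, HasDerivAt (fun s => P s i j) ((Q * P t) i j) t) (t : ℝ) :
    P t = exp (t • Q) := by
  have hderiv : ∀ s i j, HasDerivAt (fun s => (exp (s • -Q) * P s) i j) 0 s := by
    intro s i j
    convert hasDerivAt_mul_apply (hasDerivAt_exp_smul_apply (-Q) s) (hP s) i j using 1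
    have hcomm : Commute Q (exp (s • -Q)) :=
      ((Commute.refl Q).neg_right.smul_right s).exp_right
    rw [← Matrix.mul_assoc, ← hcomm.eq, Matrix.neg_mul, Matrix.neg_mul, neg_add_cancel,
      zero_apply]
  have hinv : exp (t • -Q) * P t = 1 := by
    ext i j
    rw [is_const_of_deriv_eq_zero (fun s => (hderiv s i j).differentiableAt)
      (fun s => (hderiv s i j).deriv) t 0, zero_smul, exp_zero, hP0, Matrix.one_mul]
  calc P t = exp (t • Q + t • -Q) * P t := by
        rw [smul_neg, add_neg_cancel, exp_zero, Matrix.one_mul]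
    _ = exp (t • Q) := by
        rw [exp_add_of_commute _ _ ((Commute.refl Q).neg_right.smul_left t |>.smul_right t),
          Matrix.mul_assoc, hinv, Matrix.mul_one]

variable {ι α β R : Type*} [CommRing R]

/-- The diagonal of `G` cancels out, so self-loops such as `moranStep A u v = A` are harmless. -/
def generatorOfRates [Fintype ι] [DecidableEq ι] (G : Matrix ι ι R) : Matrix ι ι R :=
  G - diagonal fun i => ∑ j, G i j

theorem generatorOfRates_apply_of_ne [Fintype ι] [DecidableEq ι] (G : Matrix ι ι R) {i j : ι}
    (h : i ≠ j) : generatorOfRates G i j = G i j := by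
  simp [generatorOfRates, h]

theorem sum_generatorOfRates_apply [Fintype ι] [DecidableEq ι] (G : Matrix ι ι R) (i : ι) :
    ∑ j, generatorOfRates G i j = 0 := by
  simp [generatorOfRates, sum_sub_distrib, diagonal_apply]

theorem eq_generatorOfRates [Fintype ι] [DecidableEq ι] {M G : Matrix ι ι R}
    (hoff : ∀ i j, j ≠ i → M i j = G i j) (hdiag : ∀ i, M i i = -∑ j ∈ univ.erase i, M i j) :
    M = generatorOfRates G := by
  ext i j
  obtain rfl | hij := eq_or_ne j i
  · rw [hdiag, sum_congr rfl fun k hk => hoff j k (ne_of_mem_erase hk), generatorOfRates,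
      sub_apply, diagonal_apply_eq, ← add_sum_erase _ _ (mem_univ j)]
    ring
  · rw [hoff i j hij, generatorOfRates_apply_of_ne G hij.symm]

variable (R) in
abbrev aggregationMatrix [DecidableEq α] (f : ι → α) : Matrix ι α R :=
  (1 : Matrix α α R).submatrix f id

theorem aggregationMatrix_mul_apply [Fintype α] [DecidableEq α] (f : ι → α) (M : Matrix α β R)
    (i : ι) (b : β) : (aggregationMatrix R f * M) i b = M (f i) b := by
  simp [mul_apply, one_apply]

theorem mul_aggregationMatrix_fst_apply [Fintype α] [DecidableEq α] [Fintype β]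
    (X : Matrix ι (α × β) R) (i : ι) (a : α) :
    (X * aggregationMatrix R (Prod.fst : α × β → α)) i a = ∑ b, X i (a, b) := by
  simp [mul_apply, one_apply, Fintype.sum_prod_type_right]

theorem mul_aggregationMatrix_snd_apply [Fintype α] [Fintype β] [DecidableEq β]
    (X : Matrix ι (α × β) R) (i : ι) (b : β) :
    (X * aggregationMatrix R (Prod.snd : α × β → β)) i b = ∑ a, X i (a, b) := by
  simp [mul_apply, one_apply, Fintype.sum_prod_type]

/-- Dynkin's criterion for strong lumpability. -/
theorem generatorOfRates_mul_aggregationMatrix [Fintype ι] [DecidableEq ι] [Fintype α]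
    [DecidableEq α] {G : Matrix ι ι R} {H : Matrix α α R} {f : ι → α}
    (h : ∀ i a, a ≠ f i → (G * aggregationMatrix R f) i a = H (f i) a) :
    generatorOfRates G * aggregationMatrix R f = aggregationMatrix R f * generatorOfRates H := by
  set L := aggregationMatrix R f
  have hoff : ∀ i a, a ≠ f i → (generatorOfRates G * L) i a = generatorOfRates H (f i) a := by
    intro i a ha
    simp [L, generatorOfRates, Matrix.sub_mul, diagonal_mul, ha.symm, ← h i a ha]
  have hrow : ∀ i, ∑ a, (generatorOfRates G * L) i a = 0 := by
    intro i
    simp only [mul_apply, L, submatrix_apply, id, one_apply]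
    rw [sum_comm]
    simp [sum_generatorOfRates_apply]
  ext i a
  rw [aggregationMatrix_mul_apply]
  obtain rfl | ha := eq_or_ne a (f i)
  · have hG := hrow i
    have hH := sum_generatorOfRates_apply H (f i)
    rw [← add_sum_erase _ _ (mem_univ (f i))] at hG hH
    rw [sum_congr rfl fun a ha => hoff i a (ne_of_mem_erase ha)] at hG
    linear_combination hG - hH
  · exact hoff i a ha

end Matrix

open Matrix

section JointJumps

variable {α β : Type*} [DecidableEq α] [DecidableEq β]

/-- Two exponential clocks of rates `a` and `b`, moving `x` to `x'` and `y` to `y'`, coupled so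
that they ring together at rate `min a b` while the faster one also rings alone at the excess
rate: the minimum of independent `Exp (min a b)` and `Exp (a - min a b)` times is `Exp a`. -/
def jointJumpRates (a b : ℝ) (x x' : α) (y y' : β) (q : α × β) : ℝ :=
  (if q = (x', y') then min a b else 0) + (if q = (x', y) then a - min a b else 0) +
    (if q = (x, y') then b - min a b else 0)

theorem jointJumpRates_nonneg {a b : ℝ} (ha : 0 ≤ a) (hb : 0 ≤ b) (x x' : α) (y y' : β)
    (q : α × β) : 0 ≤ jointJumpRates a b x x' y y' q := by
  unfold jointJumpRates
  have := le_min ha hb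
  have := min_le_left a b
  have := min_le_right a b
  split_ifs <;> linarith

variable [Fintype α] [Fintype β]

theorem sum_jointJumpRates_mul_fst (a b : ℝ) (x x' : α) (y y' : β) (g : α → ℝ) :
    ∑ q, jointJumpRates a b x x' y y' q * g q.1 = a * g x' + (b - min a b) * g x := by
  simp only [jointJumpRates, add_mul, sum_add_distrib, ite_mul, zero_mul, sum_ite_eq',
    mem_univ, if_true]
  ring

theorem sum_jointJumpRates_mul_snd (a b : ℝ) (x x' : α) (y y' : β) (g : β → ℝ) :
    ∑ q, jointJumpRates a b x x' y y' q * g q.2 = b * g y' + (a - min a b) * g y := by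
  simp only [jointJumpRates, add_mul, sum_add_distrib, ite_mul, zero_mul, sum_ite_eq',
    mem_univ, if_true]
  ring

end JointJumps

section Moran

variable {V : Type*} [DecidableEq V]

def moranStep (A : Finset V) (u v : V) : Finset V :=
  if u ∈ A then insert v A else A.erase v

def fitness (ρ : ℝ) (A : Finset V) (u : V) : ℝ :=
  if u ∈ A then ρ else 1

theorem moranStep_subset_moranStep {A B : Finset V} (h : A ⊆ B) (u v : V) :
    moranStep A u v ⊆ moranStep B u v := by
  unfold moranStep
  by_cases hA : u ∈ A
  · simp only [hA, h hA, if_true]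
    exact insert_subset_insert v h
  · by_cases hB : u ∈ B
    · simp only [hA, hB, if_true, if_false]
      exact (erase_subset v A).trans (h.trans (subset_insert v B))
    · simp only [hA, hB, if_false]
      exact erase_subset_erase v h

variable [Fintype V] (E : V → V → Prop) [DecidableRel E]

/-- `u` fires at rate `fitness ρ A u` onto a uniformly random out-neighbour. -/
noncomputable def jumpRate (ρ : ℝ) (A : Finset V) (u : V) : ℝ :=
  fitness ρ A u / (#{w | E u w} : ℝ)

noncomputable def moranRates (ρ : ℝ) : Matrix (Finset V) (Finset V) ℝ :=
  of fun A S => ∑ u, ∑ v ∈ {v | E u v}, if S = moranStep A u v then jumpRate E ρ A u else 0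

noncomputable def couplingRates (r r' : ℝ) :
    Matrix (Finset V × Finset V) (Finset V × Finset V) ℝ :=
  of fun p q => ∑ u, ∑ v ∈ {v | E u v},
    jointJumpRates (jumpRate E r p.1 u) (jumpRate E r' p.2 u) p.1 (moranStep p.1 u v)
      p.2 (moranStep p.2 u v) q

theorem jumpRate_nonneg {ρ : ℝ} (hρ : 0 ≤ ρ) (A : Finset V) (u : V) :
    0 ≤ jumpRate E ρ A u := by
  unfold jumpRate fitness
  split_ifs <;> positivity

theorem couplingRates_nonneg {r r' : ℝ} (hr : 0 ≤ r) (hr' : 0 ≤ r')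
    (p q : Finset V × Finset V) : 0 ≤ couplingRates E r r' p q :=
  sum_nonneg fun u _ => sum_nonneg fun _ _ =>
    jointJumpRates_nonneg (jumpRate_nonneg E hr _ u) (jumpRate_nonneg E hr' _ u) _ _ _ _ _

theorem couplingRates_mul_fst (r r' : ℝ) (p : Finset V × Finset V) (S : Finset V)
    (hS : S ≠ p.1) :
    (couplingRates E r r' * aggregationMatrix ℝ (Prod.fst : Finset V × Finset V → Finset V)) p S =
      moranRates E r p.1 S := by
  simp only [mul_apply, couplingRates, moranRates, of_apply, submatrix_apply, id_eq, one_apply,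
    sum_mul]
  rw [sum_comm]
  refine sum_congr rfl fun u _ => ?_
  rw [sum_comm]
  refine sum_congr rfl fun v _ => ?_
  rw [sum_jointJumpRates_mul_fst (g := fun T => if T = S then 1 else 0)]
  simp [hS.symm, eq_comm]

theorem couplingRates_mul_snd (r r' : ℝ) (p : Finset V × Finset V) (S : Finset V)
    (hS : S ≠ p.2) :
    (couplingRates E r r' * aggregationMatrix ℝ (Prod.snd : Finset V × Finset V → Finset V)) p S =
      moranRates E r' p.2 S := by
  simp only [mul_apply, couplingRates, moranRates, of_apply, submatrix_apply, id_eq, one_apply,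
    sum_mul]
  rw [sum_comm]
  refine sum_congr rfl fun u _ => ?_
  rw [sum_comm]
  refine sum_congr rfl fun v _ => ?_
  rw [sum_jointJumpRates_mul_snd (g := fun T => if T = S then 1 else 0)]
  simp [hS.symm, eq_comm]

/-- A mutant of `A` is a mutant of `B` and fires there at least as fast, so it never fires alone
in the first copy; a non-mutant of `B` fires equally fast in both copies. -/
theorem couplingRates_eq_zero {r r' : ℝ} (hrr : r ≤ r') {A B A' B' : Finset V} (h : A ⊆ B)
    (h' : ¬ A' ⊆ B') : couplingRates E r r' (A, B) (A', B') = 0 := by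
  refine sum_eq_zero fun u _ => sum_eq_zero fun v _ => ?_
  have hjoint : (A', B') ≠ (moranStep A u v, moranStep B u v) := by
    rintro ⟨⟩
    exact h' (moranStep_subset_moranStep h u v)
  have hfst : (A', B') = (moranStep A u v, B) →
      jumpRate E r A u - min (jumpRate E r A u) (jumpRate E r' B u) = 0 := by
    rintro ⟨⟩
    by_cases hu : u ∈ A
    · have : jumpRate E r A u ≤ jumpRate E r' B u := by
        simp only [jumpRate, fitness, hu, h hu, if_true]
        gcongr
      rw [min_eq_left this, sub_self]
    · simp only [moranStep, hu, if_false] at h'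
      exact absurd ((erase_subset v A).trans h) h'
  have hsnd : (A', B') = (A, moranStep B u v) →
      jumpRate E r' B u - min (jumpRate E r A u) (jumpRate E r' B u) = 0 := by
    rintro ⟨⟩
    by_cases hu : u ∈ B
    · simp only [moranStep, hu, if_true] at h'
      exact absurd (h.trans (subset_insert v B)) h'
    · have hu' : u ∉ A := fun hA => hu (h hA)
      simp [jumpRate, fitness, hu, hu']
  simp only [jointJumpRates, if_neg hjoint]
  split_ifs with h₁ h₂ h₂
  · rw [hfst h₁, hsnd h₂]; ring
  · rw [hfst h₁]; ring
  · rw [hsnd h₂]; ring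
  · ring

end Moran

theorem stmt_14_general {V : Type*} [Fintype V] [DecidableEq V]
    (E : V → V → Prop) [DecidableRel E]
    (r r' : ℝ) (hr : 1 ≤ r) (hrr : r ≤ r')
    (Q Q' : Matrix (Finset V) (Finset V) ℝ)
    (hQoff : ∀ S S' : Finset V, S' ≠ S → Q S S' =
      ∑ u : V, ∑ v ∈ univ.filter (fun v => E u v),
        if S' = (if u ∈ S then insert v S else S.erase v) then
          (if u ∈ S then r else 1) / ((univ.filter (fun w => E u w)).card : ℝ)
        else 0)
    (hQdiag : ∀ S : Finset V, Q S S = -∑ S' ∈ univ.erase S, Q S S')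
    (hQ'off : ∀ S S' : Finset V, S' ≠ S → Q' S S' =
      ∑ u : V, ∑ v ∈ univ.filter (fun v => E u v),
        if S' = (if u ∈ S then insert v S else S.erase v) then
          (if u ∈ S then r' else 1) / ((univ.filter (fun w => E u w)).card : ℝ)
        else 0)
    (hQ'diag : ∀ S : Finset V, Q' S S = -∑ S' ∈ univ.erase S, Q' S S')
    (P P' : ℝ → Matrix (Finset V) (Finset V) ℝ)
    (hP0 : P 0 = 1) (hP'0 : P' 0 = 1)
    (hPderiv : ∀ (t : ℝ) (S S' : Finset V),
      HasDerivAt (fun s => P s S S') ((Q * P t) S S') t)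
    (hP'deriv : ∀ (t : ℝ) (S S' : Finset V),
      HasDerivAt (fun s => P' s S S') ((Q' * P' t) S S') t) :
    ∃ C : ℝ → Matrix (Finset V × Finset V) (Finset V × Finset V) ℝ,
      C 0 = 1 ∧
      (∀ s t : ℝ, 0 ≤ s → 0 ≤ t → C (s + t) = C s * C t) ∧
      (∀ t : ℝ, 0 ≤ t → ∀ p q : Finset V × Finset V, 0 ≤ C t p q) ∧
      (∀ t : ℝ, 0 ≤ t → ∀ A B A' B' : Finset V, A ⊆ B → ¬ A' ⊆ B' →
        C t (A, B) (A', B') = 0) ∧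
      (∀ t : ℝ, 0 ≤ t → ∀ A B : Finset V, A ⊆ B →
        (∀ A' : Finset V, (∑ B' : Finset V, C t (A, B) (A', B')) = P t A A') ∧
        (∀ B' : Finset V, (∑ A' : Finset V, C t (A, B) (A', B')) = P' t B B')) := by
  have hr0 : 0 ≤ r := zero_le_one.trans hr
  have hQ : Q = generatorOfRates (moranRates E r) := eq_generatorOfRates hQoff hQdiag
  have hQ' : Q' = generatorOfRates (moranRates E r') := eq_generatorOfRates hQ'off hQ'diag
  have hfst := generatorOfRates_mul_aggregationMatrix (couplingRates_mul_fst E r r')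
  have hsnd := generatorOfRates_mul_aggregationMatrix (couplingRates_mul_snd E r r')
  refine ⟨fun t => exp (t • generatorOfRates (couplingRates E r r')), by simp,
    fun s t _ _ => ?_, fun t ht p q => ?_, fun t _ A B A' B' hAB hA'B' => ?_,
    fun t _ A B _ => ⟨fun A' => ?_, fun B' => ?_⟩⟩
  · simp only [add_smul]
    exact exp_add_of_commute _ _ (((Commute.refl _).smul_left s).smul_right t)
  · refine exp_apply_nonneg_of_offDiag_nonneg (fun i j hij => ?_) p q
    rw [Matrix.smul_apply, generatorOfRates_apply_of_ne _ hij, smul_eq_mul]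
    exact mul_nonneg ht (couplingRates_nonneg E hr0 (hr0.trans hrr) i j)
  · refine exp_apply_eq_zero_of_invariant (Good := fun p => p.1 ⊆ p.2)
      (fun p q hp hq => ?_) hAB hA'B'
    rw [Matrix.smul_apply, generatorOfRates_apply_of_ne _ (by rintro rfl; exact hq hp),
      couplingRates_eq_zero E hrr hp hq, smul_zero]
  · rw [← mul_aggregationMatrix_fst_apply, exp_mul_eq_mul_exp_of_mul_eq (K := t • Q)
      (by rw [Matrix.smul_mul, hfst, Matrix.mul_smul, hQ]), aggregationMatrix_mul_apply,
      eq_exp_smul_of_hasDerivAt hP0 hPderiv]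
  · rw [← mul_aggregationMatrix_snd_apply, exp_mul_eq_mul_exp_of_mul_eq (K := t • Q')
      (by rw [Matrix.smul_mul, hsnd, Matrix.mul_smul, hQ']), aggregationMatrix_mul_apply,
      eq_exp_smul_of_hasDerivAt hP'0 hP'deriv]

/-- Coupling lemma for the continuous-time Moran process.  `Q` and `Q'` are
the generators of the continuous-time Moran processes on the digraph `E` with
mutant fitnesses `r` and `r'` respectively (each vertex reproduces at rate
equal to its fitness, copying its state to a uniformly random out-neighbour),
and `P`, `P'` are the corresponding transition semigroups, characterized by
`P 0 = 1` and Kolmogorov's backward equation.  If `Y ⊆ Y'` and `1 ≤ r ≤ r'`,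
then there is a Markovian coupling `C` of the two processes — a transition
semigroup on pairs with the correct marginals — which preserves the relation
`⊆` between the two mutant sets for all times `t ≥ 0`; in particular the
process started at `Y` with fitness `r` is at all times contained in the
process started at `Y'` with fitness `r'`. -/
theorem stmt_14 {V : Type*} [Fintype V] [DecidableEq V] [Nonempty V]
    (E : V → V → Prop) [DecidableRel E]
    (hdeg : ∀ u : V, 0 < (univ.filter (fun w => E u w)).card)
    (r r' : ℝ) (hr : 1 ≤ r) (hrr : r ≤ r')
    (Y Y' : Finset V) (hY : Y ⊆ Y')
    (Q Q' : Matrix (Finset V) (Finset V) ℝ)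
    (hQoff : ∀ S S' : Finset V, S' ≠ S → Q S S' =
      ∑ u : V, ∑ v ∈ univ.filter (fun v => E u v),
        if S' = (if u ∈ S then insert v S else S.erase v) then
          (if u ∈ S then r else 1) / ((univ.filter (fun w => E u w)).card : ℝ)
        else 0)
    (hQdiag : ∀ S : Finset V, Q S S = -∑ S' ∈ univ.erase S, Q S S')
    (hQ'off : ∀ S S' : Finset V, S' ≠ S → Q' S S' =
      ∑ u : V, ∑ v ∈ univ.filter (fun v => E u v),
        if S' = (if u ∈ S then insert v S else S.erase v) then
          (if u ∈ S then r' else 1) / ((univ.filter (fun w => E u w)).card : ℝ)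
        else 0)
    (hQ'diag : ∀ S : Finset V, Q' S S = -∑ S' ∈ univ.erase S, Q' S S')
    (P P' : ℝ → Matrix (Finset V) (Finset V) ℝ)
    (hP0 : P 0 = 1) (hP'0 : P' 0 = 1)
    (hPderiv : ∀ (t : ℝ) (S S' : Finset V),
      HasDerivAt (fun s => P s S S') ((Q * P t) S S') t)
    (hP'deriv : ∀ (t : ℝ) (S S' : Finset V),
      HasDerivAt (fun s => P' s S S') ((Q' * P' t) S S') t) :
    ∃ C : ℝ → Matrix (Finset V × Finset V) (Finset V × Finset V) ℝ,
      C 0 = 1 ∧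
      (∀ s t : ℝ, 0 ≤ s → 0 ≤ t → C (s + t) = C s * C t) ∧
      (∀ t : ℝ, 0 ≤ t → ∀ p q : Finset V × Finset V, 0 ≤ C t p q) ∧
      (∀ t : ℝ, 0 ≤ t → ∀ A B A' B' : Finset V, A ⊆ B → ¬ A' ⊆ B' →
        C t (A, B) (A', B') = 0) ∧
      (∀ t : ℝ, 0 ≤ t → ∀ A B : Finset V, A ⊆ B →
        (∀ A' : Finset V, (∑ B' : Finset V, C t (A, B) (A', B')) = P t A A') ∧
        (∀ B' : Finset V, (∑ A' : Finset V, C t (A, B) (A', B')) = P' t B B')) :=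
  stmt_14_general E r r' hr hrr Q Q' hQoff hQdiag hQ'off hQ'diag P P' hP0 hP'0 hPderiv hP'deriv
end

section
/- For any strongly connected digraph G, if 0 < r ≤ r′ and S ⊆ S′ ⊆ V(G), then the fixation probability of the Moran process started from mutant set S with fitness r is at most the fixation probability started from S′ with fitness r′: f_{G,r}(S) ≤ f_{G,r′}(S′). -/
open Finset

/-!
Couple the two processes on pairs `A ⊆ B`: along an edge `u → v` both chains move at rate
`min (c u) (d u)` (with `c`, `d` the two fitness profiles) and only the fitter one moves at the
excess rate. Since `r ≤ r'`, `A` alone is fitter only when `u ∉ A` and `B` alone only when `u ∈ B`,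
so every coupled move keeps `A ⊆ B`. Fixation probabilities have vanishing generator (trivially at
the absorbing states `∅` and `univ`), so `f X - g Y` has vanishing coupled generator, and every
coupled move out of a maximiser over pairs `X ⊆ Y` leads to another maximiser. By strong
connectivity a non-absorbing pair has a move increasing `#A + #B`, so the maximum is attained at
one of `(∅, ∅)`, `(∅, univ)`, `(univ, univ)`, where `f X - g Y ≤ 0`.
-/

namespace Moran

variable {V : Type*} {E : V → V → Prop}

section Step

variable [DecidableEq V]

def step (S : Finset V) (u v : V) : Finset V := if u ∈ S then insert v S else S.erase v

noncomputable def fitness (r : ℝ) (S : Finset V) (u : V) : ℝ := if u ∈ S then r else 1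

lemma step_of_mem {S : Finset V} {u : V} (hu : u ∈ S) (v : V) : step S u v = insert v S :=
  if_pos hu

lemma step_of_notMem {S : Finset V} {u : V} (hu : u ∉ S) (v : V) : step S u v = S.erase v :=
  if_neg hu

@[simp] lemma step_empty (u v : V) : step ∅ u v = ∅ := by simp [step]

lemma step_mono {A B : Finset V} (hAB : A ⊆ B) (u v : V) : step A u v ⊆ step B u v := by
  by_cases hA : u ∈ A
  · rw [step_of_mem hA, step_of_mem (hAB hA)]
    exact insert_subset_insert v hAB
  · rw [step_of_notMem hA]
    by_cases hB : u ∈ B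
    · rw [step_of_mem hB]
      exact (erase_subset v A).trans (hAB.trans (subset_insert v B))
    · rw [step_of_notMem hB]
      exact erase_subset_erase v hAB

lemma subset_step {S : Finset V} {v : V} (hv : v ∉ S) (u : V) : S ⊆ step S u v := by
  unfold step
  split_ifs
  · exact subset_insert v S
  · rw [erase_eq_of_notMem hv]

lemma fitness_pos {r : ℝ} (hr : 0 < r) (S : Finset V) (u : V) : 0 < fitness r S u := by
  unfold fitness
  split_ifs
  exacts [hr, one_pos]

lemma fitness_le_fitness_of_mem {r r' : ℝ} (hrr : r ≤ r') {A B : Finset V} (hAB : A ⊆ B)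
    {u : V} (hu : u ∈ A) : fitness r A u ≤ fitness r' B u := by
  simp [fitness, hu, hAB hu, hrr]

lemma fitness_eq_fitness_of_notMem (r r' : ℝ) {A B : Finset V} (hAB : A ⊆ B) {u : V}
    (hu : u ∉ B) : fitness r A u = fitness r' B u := by
  simp [fitness, hu, mt (@hAB u) hu]

end Step

section Graph

variable [Fintype V]

variable (E) in
def outNbrs [DecidableRel E] (u : V) : Finset V := univ.filter (fun v => E u v)

lemma outNbrs_nonempty [DecidableRel E] [Nontrivial V]
    (hstrong : ∀ u v : V, Relation.ReflTransGen E u v) (u : V) : (outNbrs E u).Nonempty := by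
  obtain ⟨x, hx⟩ := exists_ne u
  rcases (hstrong u x).cases_head with rfl | ⟨w, huw, -⟩
  · exact absurd rfl hx
  · exact ⟨w, by simpa [outNbrs] using huw⟩

lemma exists_edge_mem_notMem (hstrong : ∀ u v : V, Relation.ReflTransGen E u v)
    {S : Finset V} (hS : S.Nonempty) (hSu : S ≠ univ) : ∃ u ∈ S, ∃ v ∉ S, E u v := by
  obtain ⟨a, ha⟩ := hS
  obtain ⟨b, hb⟩ := not_forall.1 (mt eq_univ_iff_forall.2 hSu)
  by_contra hnone
  refine hb ?_
  clear hb
  induction hstrong a b with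
  | refl => exact ha
  | tail _ hcd ih => exact by_contra fun hc => hnone ⟨_, ih, _, hc, hcd⟩

end Graph

variable [Fintype V] [DecidableEq V]

@[simp] lemma step_univ (u v : V) : step univ u v = univ := by simp [step]

noncomputable def totalFitness (r : ℝ) (S : Finset V) : ℝ :=
  Fintype.card V + (r - 1) * #S

lemma sum_fitness (r : ℝ) (S : Finset V) : ∑ u, fitness r S u = totalFitness r S := by
  have hcompl : (#Sᶜ : ℝ) = Fintype.card V - #S := by
    rw [card_compl, Nat.cast_sub (card_le_univ S)]
  simp only [fitness, totalFitness, sum_ite, filter_mem_eq_inter, univ_inter, filter_not,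
    sum_const, nsmul_eq_mul, mul_one, ← compl_eq_univ_sdiff, hcompl]
  ring

lemma totalFitness_pos [Nonempty V] {r : ℝ} (hr : 0 < r) (S : Finset V) :
    0 < totalFitness r S := by
  rw [← sum_fitness]
  exact sum_pos (fun u _ => fitness_pos hr S u) univ_nonempty

lemma exists_step_card_lt (hstrong : ∀ u v : V, Relation.ReflTransGen E u v)
    {A B : Finset V} (hAB : A ⊆ B) (hB : B.Nonempty) (hA : A ≠ univ) (hAB' : A = ∅ → B ≠ univ) :
    ∃ u v, E u v ∧ #A + #B < #(step A u v) + #(step B u v) := by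
  by_cases hBu : B = univ
  · subst hBu
    obtain ⟨u, hu, v, hv, huv⟩ :=
      exists_edge_mem_notMem hstrong (nonempty_iff_ne_empty.2 fun h => hAB' h rfl) hA
    refine ⟨u, v, huv, ?_⟩
    rw [step_of_mem hu, step_univ, card_insert_of_notMem hv]
    omega
  · obtain ⟨u, hu, v, hv, huv⟩ := exists_edge_mem_notMem hstrong hB hBu
    have hA_le := card_le_card (subset_step (mt (@hAB v) hv) u)
    refine ⟨u, v, huv, ?_⟩
    rw [step_of_mem hu, card_insert_of_notMem hv]
    omega

variable [DecidableRel E]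

variable (E) in
noncomputable def generator (r : ℝ) (φ : Finset V → ℝ) (A : Finset V) : ℝ :=
  ∑ u, ∑ v ∈ outNbrs E u, fitness r A u / #(outNbrs E u) * (φ (step A u v) - φ A)

lemma sum_moranP_mul (r : ℝ) (A : Finset V) (φ : Finset V → ℝ) :
    ∑ B, moranP E r A B * φ B = ∑ u, ∑ v ∈ outNbrs E u,
      fitness r A u / (totalFitness r A * #(outNbrs E u)) * φ (step A u v) := by
  simp only [moranP, outNbrs, step, fitness, totalFitness, sum_mul, ite_mul, zero_mul]
  rw [sum_comm]
  refine sum_congr rfl fun u _ => ?_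
  rw [sum_comm]
  exact sum_congr rfl fun v _ => by simp only [sum_ite_eq']; simp

lemma generator_eq (hdeg : ∀ u, (outNbrs E u).Nonempty) {r : ℝ} {A : Finset V}
    (hW : totalFitness r A ≠ 0) (φ : Finset V → ℝ) :
    generator E r φ A = totalFitness r A * (∑ B, moranP E r A B * φ B - φ A) := by
  have hcard (u : V) : (#(outNbrs E u) : ℝ) ≠ 0 := by exact_mod_cast (hdeg u).card_pos.ne'
  calc generator E r φ A
      = ∑ u, ∑ v ∈ outNbrs E u, fitness r A u / #(outNbrs E u) * φ (step A u v)
        - ∑ u, fitness r A u * φ A := by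
        rw [generator, ← sum_sub_distrib]
        refine sum_congr rfl fun u _ => ?_
        simp only [mul_sub, sum_sub_distrib, sum_const, nsmul_eq_mul]
        field_simp [hcard u]
    _ = totalFitness r A * (∑ B, moranP E r A B * φ B - φ A) := by
        rw [sum_moranP_mul, ← sum_mul, sum_fitness, mul_sub, mul_sum]
        congr 1
        refine sum_congr rfl fun u _ => ?_
        rw [mul_sum]
        refine sum_congr rfl fun v _ => ?_
        field_simp [hcard u]

lemma generator_eq_zero (hstrong : ∀ u v : V, Relation.ReflTransGen E u v) {r : ℝ} (hr : 0 < r)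
    {φ : Finset V → ℝ}
    (hrec : ∀ A : Finset V, A ≠ ∅ → A ≠ univ → φ A = ∑ B, moranP E r A B * φ B)
    (A : Finset V) : generator E r φ A = 0 := by
  rcases eq_or_ne A ∅ with rfl | hA₀
  · simp [generator]
  rcases eq_or_ne A univ with rfl | hAu
  · simp [generator]
  obtain ⟨u, hu, v, hv, -⟩ := exists_edge_mem_notMem hstrong (nonempty_iff_ne_empty.2 hA₀) hAu
  have : Nontrivial V := nontrivial_of_ne u v (ne_of_mem_of_not_mem hu hv)
  rw [generator_eq (outNbrs_nonempty hstrong) (totalFitness_pos hr A).ne', ← hrec A hA₀ hAu,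
    sub_self, mul_zero]

lemma sub_step_eq_of_forall_sub_le {r r' : ℝ} (hr : 0 < r) (hrr : r ≤ r')
    {f g : Finset V → ℝ} {A B : Finset V} (hAB : A ⊆ B)
    (hf : generator E r f A = 0) (hg : generator E r' g B = 0)
    (hmax : ∀ X Y, X ⊆ Y → f X - g Y ≤ f A - g B) {u v : V} (huv : E u v) :
    f (step A u v) - g (step B u v) = f A - g B := by
  set c := fitness r A
  set d := fitness r' B
  set m := fun w => min (c w) (d w)
  -- joint move along `w → x` at rate `m w`, moves of `A` alone and of `B` alone at the excess rates
  let T (w x : V) : ℝ := m w * (f (step A w x) - g (step B w x) - (f A - g B))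
    + (c w - m w) * (f (step A w x) - f A) + (d w - m w) * (g B - g (step B w x))
  have hsum : ∑ w, ∑ x ∈ outNbrs E w, T w x / #(outNbrs E w) = 0 := by
    calc _ = generator E r f A - generator E r' g B := by
          rw [generator, generator, ← sum_sub_distrib]
          refine sum_congr rfl fun w _ => ?_
          rw [← sum_sub_distrib]
          refine sum_congr rfl fun x _ => ?_
          ring
      _ = 0 := by rw [hf, hg, sub_zero]
  have hm (w : V) : 0 < m w := lt_min (fitness_pos hr A w) (fitness_pos (hr.trans_le hrr) B w)
  have hcoupled (w x : V) : f (step A w x) - g (step B w x) - (f A - g B) ≤ 0 :=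
    sub_nonpos.2 (hmax _ _ (step_mono hAB w x))
  have honlyA (w x : V) : (c w - m w) * (f (step A w x) - f A) ≤ 0 := by
    by_cases hw : w ∈ A
    · have hcd : c w ≤ d w := fitness_le_fitness_of_mem hrr hAB hw
      simp [m, min_eq_left hcd]
    · have hle := hmax _ _ ((step_of_notMem hw x).trans_subset ((erase_subset x A).trans hAB))
      exact mul_nonpos_of_nonneg_of_nonpos (sub_nonneg.2 (min_le_left _ _)) (by linarith)
  have honlyB (w x : V) : (d w - m w) * (g B - g (step B w x)) ≤ 0 := by
    by_cases hw : w ∈ B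
    · have hle := hmax _ _ (hAB.trans ((subset_insert x B).trans (step_of_mem hw x).symm.subset))
      exact mul_nonpos_of_nonneg_of_nonpos (sub_nonneg.2 (min_le_right _ _)) (by linarith)
    · have hcd : c w = d w := fitness_eq_fitness_of_notMem r r' hAB hw
      simp [m, hcd]
  have hT (w x : V) : T w x ≤ 0 :=
    add_nonpos (add_nonpos (mul_nonpos_of_nonneg_of_nonpos (hm w).le (hcoupled w x))
      (honlyA w x)) (honlyB w x)
  have hv : v ∈ outNbrs E u := by simp [outNbrs, huv]
  have hTuv : T u v = 0 := by
    have hzero := (sum_eq_zero_iff_of_nonpos fun w _ => sum_nonpos fun x _ =>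
      div_nonpos_of_nonpos_of_nonneg (hT w x) (Nat.cast_nonneg _)).1 hsum u (mem_univ u)
    have := (sum_eq_zero_iff_of_nonpos fun x _ =>
      div_nonpos_of_nonpos_of_nonneg (hT u x) (Nat.cast_nonneg _)).1 hzero v hv
    exact (div_eq_zero_iff.1 this).resolve_right (Nat.cast_ne_zero.2 (card_ne_zero_of_mem hv))
  have hcoupled_uv : m u * (f (step A u v) - g (step B u v) - (f A - g B)) = 0 := by
    linarith [honlyA u v, honlyB u v, mul_nonpos_of_nonneg_of_nonpos (hm u).le (hcoupled u v)]
  linarith [(mul_eq_zero.1 hcoupled_uv).resolve_left (hm u).ne']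

theorem exists_absorbing_maximizer (hstrong : ∀ u v : V, Relation.ReflTransGen E u v)
    {r r' : ℝ} (hr : 0 < r) (hrr : r ≤ r') {f g : Finset V → ℝ}
    (hf : ∀ A, generator E r f A = 0) (hg : ∀ B, generator E r' g B = 0) :
    ∃ A B, A ⊆ B ∧ (B = ∅ ∨ A = univ ∨ A = ∅ ∧ B = univ) ∧
      ∀ X Y, X ⊆ Y → f X - g Y ≤ f A - g B := by
  let P : Set (Finset V × Finset V) := {p | p.1 ⊆ p.2}
  obtain ⟨p₀, hp₀, hmax₀⟩ :=
    P.exists_max_image (fun p => f p.1 - g p.2) P.toFinite ⟨(∅, ∅), empty_subset ∅⟩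
  let Q := {p ∈ P | f p.1 - g p.2 = f p₀.1 - g p₀.2}
  obtain ⟨⟨A, B⟩, ⟨hAB, hAB_eq⟩, hQmax⟩ :=
    Q.exists_max_image (fun p => #p.1 + #p.2) Q.toFinite ⟨p₀, hp₀, rfl⟩
  have hmax : ∀ X Y, X ⊆ Y → f X - g Y ≤ f A - g B :=
    fun X Y h => hAB_eq ▸ hmax₀ (X, Y) h
  refine ⟨A, B, hAB, ?_, hmax⟩
  by_contra! habs
  obtain ⟨u, v, huv, hlt⟩ := exists_step_card_lt hstrong hAB habs.1 habs.2.1 habs.2.2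
  have hstep := sub_step_eq_of_forall_sub_le hr hrr hAB (hf A) (hg B) hmax huv
  exact hlt.not_ge (hQmax (step A u v, step B u v) ⟨step_mono hAB u v, hstep.trans hAB_eq⟩)

end Moran

open Moran

theorem stmt_15_general {V : Type*} [Fintype V] [DecidableEq V]
    (E : V → V → Prop) [DecidableRel E]
    (hstrong : ∀ u v : V, Relation.ReflTransGen E u v)
    (r r' : ℝ) (hr : 0 < r) (hrr : r ≤ r')
    (S S' : Finset V) (hSS : S ⊆ S')
    (f g : Finset V → ℝ)
    (hf1 : f univ = 1) (hf0 : f ∅ = 0)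
    (hfrec : ∀ A : Finset V, A ≠ ∅ → A ≠ univ →
      f A = ∑ B : Finset V, moranP E r A B * f B)
    (hg1 : g univ = 1) (hg0 : g ∅ = 0)
    (hgrec : ∀ A : Finset V, A ≠ ∅ → A ≠ univ →
      g A = ∑ B : Finset V, moranP E r' A B * g B) :
    f S ≤ g S' := by
  obtain ⟨A, B, hAB, habs, hmax⟩ := exists_absorbing_maximizer hstrong hr hrr
    (generator_eq_zero hstrong hr hfrec) (generator_eq_zero hstrong (hr.trans_le hrr) hgrec)
  have hboundary : f A - g B ≤ 0 := by
    rcases habs with rfl | rfl | ⟨rfl, rfl⟩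
    · simp [subset_empty.1 hAB, hf0, hg0]
    · simp [univ_subset_iff.1 hAB, hf1, hg1]
    · simp [hf0, hg1]
  linarith [hmax S S' hSS]

/-- Subset/fitness domination for fixation probabilities: on a strongly
connected digraph `G`, if `0 < r ≤ r'` and `S ⊆ S'` then
`f_{G,r}(S) ≤ f_{G,r'}(S')`.  The fixation probabilities `f` (for fitness `r`)
and `g` (for fitness `r'`) are characterized as the solutions of the harmonic
one-step recurrence with boundary values `1` at the all-mutant state and `0`
at the empty state. -/
theorem stmt_15 {V : Type*} [Fintype V] [DecidableEq V] [Nonempty V]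
    (E : V → V → Prop) [DecidableRel E]
    (hstrong : ∀ u v : V, Relation.ReflTransGen E u v)
    (r r' : ℝ) (hr : 0 < r) (hrr : r ≤ r')
    (S S' : Finset V) (hSS : S ⊆ S')
    (f g : Finset V → ℝ)
    (hf1 : f univ = 1) (hf0 : f ∅ = 0)
    (hfrec : ∀ A : Finset V, A ≠ ∅ → A ≠ univ →
      f A = ∑ B : Finset V, moranP E r A B * f B)
    (hg1 : g univ = 1) (hg0 : g ∅ = 0)
    (hgrec : ∀ A : Finset V, A ≠ ∅ → A ≠ univ →
      g A = ∑ B : Finset V, moranP E r' A B * g B) :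
    f S ≤ g S' :=
  stmt_15_general E hstrong r r' hr hrr S S' hSS f g hf1 hf0 hfrec hg1 hg0 hgrec
end
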